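/- arXiv:0804.4648 — 7 statements merged into one kernel-verified Lean document; each statement's English description precedes it below -/
import Mathlib

section
/- For all x, y ∈ ℝ₊ and n ≥ 1, (x + n^{-1/2})(y + n^{-1/2}) ≤ 3(xy + n^{-1})(1 + n^{1/2}|x - y|). -/
/-! With `s = n^{-1/2}`, expanding gives `(x + s)(y + s) = xy + s² + s(x + y)`. For `x ≤ y`,
`s(x + y) = 2sx + s(y - x) ≤ x² + s² + s|x - y| ≤ xy + s² + s|x - y|`, and
`s|x - y| = s² · n^{1/2}|x - y| ≤ (xy + s²) · n^{1/2}|x - y|`. This even gives the constant `2`. -/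

lemma mul_add_le_two_mul_add_mul_abs_sub {x y s : ℝ} (hx : 0 ≤ x) (hy : 0 ≤ y) :
    (x + s) * (y + s) ≤ 2 * (x * y + s ^ 2) + s * |x - y| := by
  wlog hxy : x ≤ y generalizing x y
  · have := this hy hx (le_of_not_ge hxy)
    rw [abs_sub_comm]
    linarith
  rw [abs_of_nonpos (sub_nonpos.mpr hxy)]
  nlinarith [sq_nonneg (x - s), mul_le_mul_of_nonneg_left hxy hx]

lemma mul_add_le_two_mul_one_add_mul_abs_sub {x y s t : ℝ} (hx : 0 ≤ x) (hy : 0 ≤ y)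
    (hs : 0 < s) (hst : s * t = 1) :
    (x + s) * (y + s) ≤ 2 * (x * y + s ^ 2) * (1 + t * |x - y|) := by
  have hst_abs : s * |x - y| = s ^ 2 * (t * |x - y|) := by
    linear_combination (-s * |x - y|) * hst
  have ht : 0 < t := pos_of_mul_pos_right (hst ▸ one_pos) hs.le
  calc (x + s) * (y + s) ≤ 2 * (x * y + s ^ 2) + s ^ 2 * (t * |x - y|) :=
        hst_abs ▸ mul_add_le_two_mul_add_mul_abs_sub hx hy
    _ ≤ 2 * (x * y + s ^ 2) + 2 * (x * y + s ^ 2) * (t * |x - y|) := by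
        gcongr
        nlinarith [mul_nonneg hx hy]
    _ = 2 * (x * y + s ^ 2) * (1 + t * |x - y|) := by ring

theorem stmt0 (x y n : ℝ) (hx : 0 < x) (hy : 0 < y) (hn : 1 ≤ n) :
    (x + n ^ (-(1:ℝ)/2)) * (y + n ^ (-(1:ℝ)/2)) ≤
      3 * (x * y + n⁻¹) * (1 + n ^ ((1:ℝ)/2) * |x - y|) := by
  have hn0 : 0 < n := by linarith
  have hst : n ^ (-(1:ℝ)/2) * n ^ ((1:ℝ)/2) = 1 := by
    rw [← Real.rpow_add hn0]; norm_num
  have hss : (n ^ (-(1:ℝ)/2)) ^ 2 = n⁻¹ := by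
    rw [← Real.rpow_natCast, ← Real.rpow_mul hn0.le]; norm_num [Real.rpow_neg_one]
  have hbound := mul_add_le_two_mul_one_add_mul_abs_sub hx.le hy.le
    (Real.rpow_pos_of_pos hn0 _) hst
  rw [hss] at hbound
  refine hbound.trans (mul_le_mul_of_nonneg_right ?_ (by positivity))
  have : 0 ≤ x * y + n⁻¹ := by positivity
  linarith
end

section
/- Let s ∈ ℝ, γ ≥ 0, and σ > (2γ+1)(|s|+1) + 1. Then there is a constant c (depending on s, γ, σ) such that for all z > 0: ∫₀^∞ u^{2γ+1} / ((1+u)^{(2γ+1)s} (1+|u-z|)^σ) du ≤ c (1+z)^{-(2γ+1)(s-1)}. -/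
open MeasureTheory Real

lemma rpow_sandwich {x y t : ℝ} (hx : 0 < x) (hy : 0 < y) (ht : 0 < t)
    (h1 : x ≤ y * t) (h2 : y ≤ x * t) (a : ℝ) : x ^ a ≤ y ^ a * t ^ |a| := by
  rcases le_or_gt 0 a with ha | ha
  · rw [abs_of_nonneg ha]
    calc x ^ a ≤ (y * t) ^ a := Real.rpow_le_rpow hx.le h1 ha
      _ = y ^ a * t ^ a := Real.mul_rpow hy.le ht.le
  · rw [abs_of_neg ha]
    have hyt : y / t ≤ x := by
      rw [div_le_iff₀ ht]; linarith
    have h3 : x ^ a ≤ (y / t) ^ a :=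
      Real.rpow_le_rpow_of_nonpos (div_pos hy ht) hyt ha.le
    calc x ^ a ≤ (y / t) ^ a := h3
      _ = y ^ a / t ^ a := Real.div_rpow hy.le ht.le a
      _ = y ^ a * t ^ (-a) := by rw [Real.rpow_neg ht.le, div_eq_mul_inv]

theorem stmt1 (s γ σ : ℝ) (hγ : 0 ≤ γ) (hσ : (2*γ+1)*(|s|+1) + 1 < σ) :
    ∃ c : ℝ, ∀ z : ℝ, 0 < z →
      (∫ u in Set.Ioi (0:ℝ),
          u ^ (2*γ+1) / ((1+u) ^ ((2*γ+1)*s) * (1+|u-z|) ^ σ))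
        ≤ c * (1+z) ^ (-((2*γ+1)*(s-1))) := by
  set p : ℝ := 2*γ+1 with hp
  have hp0 : 0 < p := by positivity
  set a : ℝ := p * (1 - s) with ha
  set b : ℝ := |a| - σ with hb
  have hab : |a| ≤ p * (|s| + 1) := by
    have h1 : |1 - s| ≤ |s| + 1 := by
      calc |1 - s| ≤ |(1:ℝ)| + |s| := abs_sub _ _
        _ = |s| + 1 := by simp [add_comm]
    calc |a| = p * |1 - s| := by rw [ha, abs_mul, abs_of_pos hp0]
      _ ≤ p * (|s| + 1) := by nlinarith
  have hb1 : (1:ℝ) < -b := by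
    simp only [hb, neg_sub]
    linarith
  -- integrability of (1 + |x|)^b on ℝ
  have hint : Integrable (fun x : ℝ => (1 + |x|) ^ b) := by
    have := integrable_one_add_norm (E := ℝ) (μ := volume) (r := -b) (by
      simpa using hb1)
    simpa [Real.norm_eq_abs] using this
  refine ⟨∫ x : ℝ, (1 + |x|) ^ b, fun z hz => ?_⟩
  set c : ℝ := ∫ x : ℝ, (1 + |x|) ^ b with hc
  have hz1 : (0:ℝ) < 1 + z := by linarith
  have hintz : Integrable (fun u : ℝ => (1 + |u - z|) ^ b) :=
    hint.comp_sub_right z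
  have hpt : ∀ u ∈ Set.Ioi (0:ℝ),
      u ^ p / ((1+u) ^ (p*s) * (1+|u-z|) ^ σ)
        ≤ (1+z) ^ a * (1 + |u - z|) ^ b := by
    intro u hu
    have hu0 : (0:ℝ) < u := hu
    have hU : (0:ℝ) < 1 + u := by linarith
    have hw : (0:ℝ) < 1 + |u - z| := by positivity
    have h1 : 1 + u ≤ (1 + z) * (1 + |u - z|) := by
      have := le_abs_self (u - z)
      nlinarith [abs_nonneg (u - z)]
    have h2 : 1 + z ≤ (1 + u) * (1 + |u - z|) := by
      have := neg_abs_le (u - z)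
      nlinarith [abs_nonneg (u - z)]
    have key : (1 + u) ^ a ≤ (1 + z) ^ a * (1 + |u - z|) ^ |a| :=
      rpow_sandwich hU hz1 hw h1 h2 a
    have hup : u ^ p ≤ (1 + u) ^ p :=
      Real.rpow_le_rpow hu0.le (by linarith) hp0.le
    have step1 : u ^ p / ((1+u) ^ (p*s) * (1+|u-z|) ^ σ)
        ≤ (1+u) ^ a * (1+|u-z|) ^ (-σ) := by
      rw [div_le_iff₀ (by positivity)]
      have e1 : (1+u) ^ a * (1+|u-z|) ^ (-σ) * ((1+u) ^ (p*s) * (1+|u-z|) ^ σ)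
          = (1+u) ^ (a + p*s) * ((1+|u-z|) ^ (-σ + σ)) := by
        rw [mul_mul_mul_comm, ← Real.rpow_add hU, ← Real.rpow_add hw]
      rw [e1]
      have : a + p * s = p := by rw [ha]; ring
      rw [this]
      simpa using hup
    have step2 : (1+u) ^ a * (1+|u-z|) ^ (-σ)
        ≤ (1+z) ^ a * (1 + |u - z|) ^ b := by
      have e2 : (1+z) ^ a * (1 + |u - z|) ^ b
          = ((1+z) ^ a * (1+|u-z|) ^ |a|) * (1+|u-z|) ^ (-σ) := by
        rw [mul_assoc, ← Real.rpow_add hw, hb]; ring_nf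
      rw [e2]
      exact mul_le_mul_of_nonneg_right key (Real.rpow_nonneg hw.le _)
    exact step1.trans step2
  have hnn : 0 ≤ᵐ[volume.restrict (Set.Ioi (0:ℝ))]
      (fun u : ℝ => u ^ p / ((1+u) ^ (p*s) * (1+|u-z|) ^ σ)) := by
    filter_upwards [ae_restrict_mem measurableSet_Ioi] with u hu
    have : (0:ℝ) < u := hu
    positivity
  have hle : ∀ᵐ u ∂(volume.restrict (Set.Ioi (0:ℝ))),
      u ^ p / ((1+u) ^ (p*s) * (1+|u-z|) ^ σ)
        ≤ (1+z) ^ a * (1 + |u - z|) ^ b := by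
    filter_upwards [ae_restrict_mem measurableSet_Ioi] with u hu
    exact hpt u hu
  have hgi : Integrable (fun u : ℝ => (1+z) ^ a * (1 + |u - z|) ^ b)
      (volume.restrict (Set.Ioi (0:ℝ))) :=
    (hintz.const_mul _).integrableOn
  have main : (∫ u in Set.Ioi (0:ℝ),
      u ^ p / ((1+u) ^ (p*s) * (1+|u-z|) ^ σ))
      ≤ ∫ u in Set.Ioi (0:ℝ), (1+z) ^ a * (1 + |u - z|) ^ b :=
    integral_mono_of_nonneg hnn hgi hle
  have bnd2 : (∫ u in Set.Ioi (0:ℝ), (1+z) ^ a * (1 + |u - z|) ^ b)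
      ≤ c * (1+z) ^ a := by
    rw [integral_const_mul]
    have h3 : (∫ u in Set.Ioi (0:ℝ), (1 + |u - z|) ^ b)
        ≤ ∫ u : ℝ, (1 + |u - z|) ^ b :=
      setIntegral_le_integral hintz (Filter.Eventually.of_forall fun u => by positivity)
    have h4 : (∫ u : ℝ, (1 + |u - z|) ^ b) = c := by
      rw [hc, ← integral_sub_right_eq_self (fun x : ℝ => (1 + |x|) ^ b) z]
    rw [mul_comm c]
    exact mul_le_mul_of_nonneg_left (h4 ▸ h3) (Real.rpow_nonneg hz1.le _)
  have hea : -(p * (s - 1)) = a := by rw [ha]; ring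
  calc (∫ u in Set.Ioi (0:ℝ),
      u ^ p / ((1+u) ^ (p*s) * (1+|u-z|) ^ σ))
      ≤ c * (1+z) ^ a := main.trans bnd2
    _ = c * (1+z) ^ (-(p*(s-1))) := by rw [hea]
end

section
/- Let α = (α₁,…,α_d) with αᵢ ≥ 0, define w_α(x) = ∏ᵢ xᵢ^{2αᵢ+1} and W_α(n;x) = ∏ᵢ (xᵢ + n^{-1/2})^{2αᵢ+1} for x ∈ (0,∞)^d. If s ∈ ℝ and σ > d((2max_i α_i + 1)(|s|+1) + 1), then there is a constant c such that for all x ∈ (0,∞)^d and n ≥ 1: ∫_{(0,∞)^d} w_α(y) / (W_α(n;y)^s (1 + n^{1/2} max_i|xᵢ-yᵢ|)^σ) dy ≤ c n^{-d/2} W_α(n;x)^{-(s-1)}. -/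
open MeasureTheory

set_option maxHeartbeats 1000000 in
theorem stmt2 (d : ℕ) (hd : 0 < d) (α : Fin d → ℝ) (hα : ∀ i, 0 ≤ α i)
    (s σ : ℝ) (hσ : (d:ℝ) * ((2*(⨆ i, α i)+1)*(|s|+1)+1) < σ) :
    ∃ c : ℝ, ∀ x : Fin d → ℝ, (∀ i, 0 < x i) → ∀ n : ℝ, 1 ≤ n →
      (∫ y in Set.univ.pi (fun _ : Fin d => Set.Ioi (0:ℝ)),
          (∏ i, (y i) ^ (2*α i+1)) /
            ((∏ i, (y i + n ^ (-(1:ℝ)/2)) ^ (2*α i+1)) ^ s *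
              (1 + n ^ ((1:ℝ)/2) * ‖x - y‖) ^ σ))
        ≤ c * n ^ (-(d:ℝ)/2) *
            (∏ i, (x i + n ^ (-(1:ℝ)/2)) ^ (2*α i+1)) ^ (-(s-1)) := by
  have hdR : (0:ℝ) < d := Nat.cast_pos.mpr hd
  set M := ⨆ i, α i with hMdef
  have hM : ∀ i, α i ≤ M := fun i => le_ciSup (Set.finite_range α).bddAbove i
  have hM0 : 0 ≤ M := le_trans (hα ⟨0, hd⟩) (hM ⟨0, hd⟩)
  set A := ∑ i, (2 * α i + 1) with hAdef
  have hA0 : 0 ≤ A := Finset.sum_nonneg (fun i _ => by nlinarith [hα i])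
  have hAle : A ≤ (d:ℝ) * (2*M+1) := by
    calc A ≤ ∑ _i : Fin d, (2*M+1) :=
          Finset.sum_le_sum (fun i _ => by nlinarith [hM i])
      _ = (d:ℝ) * (2*M+1) := by
          simp [Finset.sum_const, nsmul_eq_mul]
          ring
  set τ := σ - A * (|s|+1) with hτdef
  have hτ : (d:ℝ) < τ := by
    have h1 : A * (|s|+1) ≤ (d:ℝ) * (2*M+1) * (|s|+1) :=
      mul_le_mul_of_nonneg_right hAle (by positivity)
    nlinarith [abs_nonneg s]
  have hτ0 : 0 ≤ τ := le_trans hdR.le hτ.le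
  set h0 : (Fin d → ℝ) → ℝ := fun z => (1 + ‖z‖) ^ (-τ) with hh0def
  have h0int : Integrable h0 :=
    integrable_one_add_norm (by rw [Module.finrank_fin_fun ℝ]; exact hτ)
  have h0nonneg : ∀ z, 0 ≤ h0 z := fun z => Real.rpow_nonneg (by positivity) _
  refine ⟨∫ z, h0 z, ?_⟩
  intro x hx n hn
  have hn0 : (0:ℝ) < n := lt_of_lt_of_le one_pos hn
  set ε := n ^ (-(1:ℝ)/2) with hεdef
  set r := n ^ ((1:ℝ)/2) with hrdef
  have hε : 0 < ε := Real.rpow_pos_of_pos hn0 _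
  have hr : 0 < r := Real.rpow_pos_of_pos hn0 _
  have hεr : ε * r = 1 := by
    rw [hεdef, hrdef, ← Real.rpow_add hn0]
    norm_num
  set W : (Fin d → ℝ) → ℝ := fun z => ∏ i, (z i + ε) ^ (2*α i+1) with hWdef
  -- per-coordinate key inequality
  have key : ∀ u v : Fin d → ℝ, (∀ i, 0 ≤ u i) →
      ∀ i, v i + ε ≤ (u i + ε) * (1 + r * ‖u - v‖) := by
    intro u v hu i
    have h1 : |u i - v i| ≤ ‖u - v‖ := by
      simpa [Real.norm_eq_abs] using norm_le_pi_norm (u - v) i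
    have h2 : v i ≤ u i + |u i - v i| := by
      have := le_abs_self (v i - u i)
      rw [abs_sub_comm] at this
      linarith
    have h3 : |u i - v i| ≤ (u i + ε) * (r * ‖u - v‖) := by
      have e1 : |u i - v i| = ε * (r * |u i - v i|) := by
        rw [← mul_assoc, hεr, one_mul]
      rw [e1]
      exact mul_le_mul (by linarith [hu i]) (mul_le_mul_of_nonneg_left h1 hr.le)
        (mul_nonneg hr.le (abs_nonneg _)) (add_nonneg (hu i) hε.le)
    nlinarith
  -- product key inequality (for nonnegative coordinates)
  have keyW : ∀ u v : Fin d → ℝ, (∀ i, 0 ≤ u i) → (∀ i, 0 ≤ v i) →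
      W v ≤ W u * (1 + r * ‖u - v‖) ^ A := by
    intro u v hu hv
    have hK0 : (0:ℝ) < 1 + r * ‖u - v‖ :=
      lt_of_lt_of_le one_pos (le_add_of_nonneg_right (mul_nonneg hr.le (norm_nonneg _)))
    calc W v ≤ ∏ i, ((u i + ε) * (1 + r * ‖u - v‖)) ^ (2*α i+1) := by
          apply Finset.prod_le_prod
          · intro i _
            exact Real.rpow_nonneg (add_nonneg (hv i) hε.le) _
          · intro i _
            exact Real.rpow_le_rpow (add_nonneg (hv i) hε.le) (key u v hu i)
              (by nlinarith [hα i])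
      _ = (∏ i, (u i + ε) ^ (2*α i+1)) * ∏ i, (1 + r * ‖u - v‖) ^ (2*α i+1) := by
          rw [← Finset.prod_mul_distrib]
          exact Finset.prod_congr rfl fun i _ =>
            Real.mul_rpow (add_nonneg (hu i) hε.le) hK0.le
      _ = W u * (1 + r * ‖u - v‖) ^ A := by
          rw [← Real.rpow_sum_of_pos hK0]
  have hWx : 0 < W x := Finset.prod_pos fun i _ =>
    Real.rpow_pos_of_pos (add_pos (hx i) hε) _
  set S : Set (Fin d → ℝ) := Set.univ.pi (fun _ : Fin d => Set.Ioi (0:ℝ)) with hSdef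
  have hS : MeasurableSet S := MeasurableSet.univ_pi fun _ => measurableSet_Ioi
  set g : (Fin d → ℝ) → ℝ := fun y => W x ^ (1-s) * h0 (r • (x - y)) with hgdef
  have hg_int : Integrable g := by
    have h1 : Integrable (fun z => h0 (r • z)) :=
      (integrable_comp_smul_iff volume h0 hr.ne').2 h0int
    exact (h1.comp_sub_left x).const_mul _
  have hgnonneg : ∀ y, 0 ≤ g y := fun y =>
    mul_nonneg (Real.rpow_nonneg hWx.le _) (h0nonneg _)
  show (∫ y in S, (∏ i, (y i) ^ (2*α i+1)) /
      ((W y) ^ s * (1 + r * ‖x - y‖) ^ σ))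
    ≤ (∫ z, h0 z) * n ^ (-(d:ℝ)/2) * W x ^ (-(s-1))
  -- pointwise bound on S
  have hpt : ∀ y ∈ S,
      (∏ i, (y i) ^ (2*α i+1)) / ((W y) ^ s * (1 + r * ‖x - y‖) ^ σ) ≤ g y := by
    intro y hy
    have hy' : ∀ i, 0 < y i := fun i => hy i (Set.mem_univ i)
    set K := 1 + r * ‖x - y‖ with hKdef
    have hK1 : (1:ℝ) ≤ K := le_add_of_nonneg_right (mul_nonneg hr.le (norm_nonneg _))
    have hK0 : (0:ℝ) < K := lt_of_lt_of_le one_pos hK1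
    have hWy : 0 < W y := Finset.prod_pos fun i _ =>
      Real.rpow_pos_of_pos (add_pos (hy' i) hε) _
    have hN : (∏ i, (y i) ^ (2*α i+1)) ≤ W y := by
      apply Finset.prod_le_prod
      · intro i _; exact Real.rpow_nonneg (hy' i).le _
      · intro i _
        exact Real.rpow_le_rpow (hy' i).le (by linarith [hε]) (by nlinarith [hα i])
    have hD : (0:ℝ) < (W y) ^ s * K ^ σ :=
      mul_pos (Real.rpow_pos_of_pos hWy _) (Real.rpow_pos_of_pos hK0 _)
    have step1 : (∏ i, (y i) ^ (2*α i+1)) / ((W y) ^ s * K ^ σ)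
        ≤ W y ^ (1-s) * K ^ (-σ) := by
      have e : W y / ((W y) ^ s * K ^ σ) = W y ^ (1-s) * K ^ (-σ) := by
        rw [Real.rpow_sub hWy, Real.rpow_one, Real.rpow_neg hK0.le]
        field_simp
      rw [← e]
      exact (div_le_div_iff_of_pos_right hD).mpr hN
    have hxy : W y ≤ W x * K ^ A := keyW x y (fun i => (hx i).le) (fun i => (hy' i).le)
    have hyx : W x ≤ W y * K ^ A := by
      have := keyW y x (fun i => (hy' i).le) (fun i => (hx i).le)
      rwa [norm_sub_rev] at this
    have step2 : W y ^ (1-s) ≤ W x ^ (1-s) * K ^ (A*(|s|+1)) := by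
      have hKA : (0:ℝ) < K ^ A := Real.rpow_pos_of_pos hK0 _
      rcases le_or_gt 0 (1-s) with ht | ht
      · calc W y ^ (1-s) ≤ (W x * K ^ A) ^ (1-s) :=
              Real.rpow_le_rpow hWy.le hxy ht
          _ = W x ^ (1-s) * K ^ (A*(1-s)) := by
              rw [Real.mul_rpow hWx.le hKA.le, ← Real.rpow_mul hK0.le]
          _ ≤ W x ^ (1-s) * K ^ (A*(|s|+1)) := by
              refine mul_le_mul_of_nonneg_left ?_ (Real.rpow_nonneg hWx.le _)
              refine Real.rpow_le_rpow_of_exponent_le hK1 ?_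
              nlinarith [neg_abs_le s, abs_nonneg s]
      · have ht' : 0 < s - 1 := by linarith
        have h4 : W x ^ (s-1) ≤ W y ^ (s-1) * K ^ (A*(s-1)) := by
          calc W x ^ (s-1) ≤ (W y * K ^ A) ^ (s-1) :=
                Real.rpow_le_rpow hWx.le hyx ht'.le
            _ = W y ^ (s-1) * K ^ (A*(s-1)) := by
                rw [Real.mul_rpow hWy.le hKA.le, ← Real.rpow_mul hK0.le]
        have ha : (0:ℝ) < W y ^ (s-1) := Real.rpow_pos_of_pos hWy _
        have hb : (0:ℝ) < W x ^ (s-1) := Real.rpow_pos_of_pos hWx _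
        have hk : (0:ℝ) < K ^ (A*(s-1)) := Real.rpow_pos_of_pos hK0 _
        have h5 : (W y ^ (s-1))⁻¹ ≤ (W x ^ (s-1))⁻¹ * K ^ (A*(s-1)) := by
          rw [← one_div, ← one_div, div_mul_eq_mul_div, div_le_div_iff₀ ha hb]
          nlinarith
        have e1 : W y ^ (1-s) = (W y ^ (s-1))⁻¹ := by
          rw [← Real.rpow_neg hWy.le, neg_sub]
        have e2 : W x ^ (1-s) = (W x ^ (s-1))⁻¹ := by
          rw [← Real.rpow_neg hWx.le, neg_sub]
        rw [e1, e2]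
        calc (W y ^ (s-1))⁻¹ ≤ (W x ^ (s-1))⁻¹ * K ^ (A*(s-1)) := h5
          _ ≤ (W x ^ (s-1))⁻¹ * K ^ (A*(|s|+1)) := by
              refine mul_le_mul_of_nonneg_left ?_ (inv_nonneg.mpr hb.le)
              refine Real.rpow_le_rpow_of_exponent_le hK1 ?_
              nlinarith [le_abs_self s, abs_nonneg s]
    have hgval : g y = W x ^ (1-s) * K ^ (-τ) := by
      simp only [hgdef, hh0def, norm_smul, Real.norm_eq_abs, abs_of_pos hr, hKdef]
    calc (∏ i, (y i) ^ (2*α i+1)) / ((W y) ^ s * K ^ σ)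
        ≤ W y ^ (1-s) * K ^ (-σ) := step1
      _ ≤ W x ^ (1-s) * K ^ (A*(|s|+1)) * K ^ (-σ) :=
          mul_le_mul_of_nonneg_right step2 (Real.rpow_nonneg hK0.le _)
      _ = W x ^ (1-s) * K ^ (-τ) := by
          rw [mul_assoc, ← Real.rpow_add hK0, hτdef]
          ring_nf
      _ = g y := hgval.symm
  -- main chain
  have hrd : ((r:ℝ) ^ d)⁻¹ = n ^ (-(d:ℝ)/2) := by
    rw [hrdef, ← Real.rpow_natCast (n ^ ((1:ℝ)/2)) d, ← Real.rpow_mul hn0.le,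
      ← Real.rpow_neg hn0.le]
    congr 1
    ring
  calc (∫ y in S, (∏ i, (y i) ^ (2*α i+1)) / ((W y) ^ s * (1 + r * ‖x - y‖) ^ σ))
      ≤ ∫ y in S, g y := by
        apply integral_mono_of_nonneg
        · filter_upwards [ae_restrict_mem hS] with y hy
          have hy' : ∀ i, 0 < y i := fun i => hy i (Set.mem_univ i)
          have hK0 : (0:ℝ) < 1 + r * ‖x - y‖ :=
            lt_of_lt_of_le one_pos (le_add_of_nonneg_right (mul_nonneg hr.le (norm_nonneg _)))
          have hWy : 0 < W y := Finset.prod_pos fun i _ =>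
            Real.rpow_pos_of_pos (add_pos (hy' i) hε) _
          exact div_nonneg (Finset.prod_nonneg fun i _ => Real.rpow_nonneg (hy' i).le _)
            (mul_nonneg (Real.rpow_nonneg hWy.le _) (Real.rpow_nonneg hK0.le _))
        · exact hg_int.restrict
        · filter_upwards [ae_restrict_mem hS] with y hy
          exact hpt y hy
    _ ≤ ∫ y, g y := setIntegral_le_integral hg_int (ae_of_all _ hgnonneg)
    _ = W x ^ (1-s) * ∫ y, h0 (r • (x - y)) := by
        rw [hgdef]
        exact integral_const_mul _ _
    _ = W x ^ (1-s) * ∫ z, h0 (r • z) := by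
        congr 1
        exact integral_sub_left_eq_self (fun z => h0 (r • z)) volume x
    _ = W x ^ (1-s) * (((r:ℝ) ^ d)⁻¹ * ∫ z, h0 z) := by
        rw [Measure.integral_comp_smul volume h0 r, Module.finrank_fin_fun ℝ,
          smul_eq_mul, abs_of_pos (inv_pos.mpr (pow_pos hr d))]
    _ = (∫ z, h0 z) * n ^ (-(d:ℝ)/2) * W x ^ (-(s-1)) := by
        rw [hrd, neg_sub]
        ring
end

section
/- For x, y ∈ (0,∞)^d and n ≥ 1, W_α(n;y) ≤ W_α(n;x)(1 + n^{1/2}‖x-y‖)^{2|α|+d}, where W_α(n;x) = ∏ᵢ(xᵢ+n^{-1/2})^{2αᵢ+1}, |α| = Σᵢ αᵢ, and ‖·‖ is the ℓ^∞ norm. -/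
/-!
With `h = n^{-1/2}` and `t = n^{1/2}‖x - y‖` we have `h t = ‖x - y‖`, so coordinatewise
`yᵢ + h ≤ xᵢ + h + h t ≤ (xᵢ + h)(1 + t)`. Raising to the powers `2αᵢ + 1 ≥ 0` and
multiplying, the factors `(1 + t)^{2αᵢ+1}` combine into `(1 + t)^{2|α| + d}`.
-/

open Finset

lemma add_le_add_mul_one_add {x y h t : ℝ} (hx : 0 ≤ x) (ht : 0 ≤ t) (hxy : y ≤ x + h * t) :
    y + h ≤ (x + h) * (1 + t) := by
  nlinarith [mul_nonneg hx ht]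

lemma apply_le_add_norm_sub {ι : Type*} [Fintype ι] (x y : ι → ℝ) (i : ι) :
    y i ≤ x i + ‖x - y‖ := by
  have h := norm_le_pi_norm (x - y) i
  rw [Pi.sub_apply, Real.norm_eq_abs] at h
  linarith [neg_abs_le (x i - y i)]

lemma Real.prod_mul_rpow {ι : Type*} (s : Finset ι) {a : ι → ℝ} (ha : ∀ i ∈ s, 0 ≤ a i)
    {c : ℝ} (hc : 0 < c) (e : ι → ℝ) :
    ∏ i ∈ s, (a i * c) ^ e i = (∏ i ∈ s, a i ^ e i) * c ^ ∑ i ∈ s, e i := by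
  rw [Real.rpow_sum_of_pos hc, ← prod_mul_distrib]
  exact prod_congr rfl fun i hi => Real.mul_rpow (ha i hi) hc.le

lemma prod_add_rpow_le_mul_one_add_rpow {ι : Type*} [Fintype ι] {e : ι → ℝ}
    (he : ∀ i, 0 ≤ e i) {h t : ℝ} (hh : 0 ≤ h) (ht : 0 ≤ t) {x y : ι → ℝ}
    (hx : ∀ i, 0 ≤ x i) (hy : ∀ i, 0 ≤ y i) (hxy : ‖x - y‖ ≤ h * t) :
    ∏ i, (y i + h) ^ e i ≤ (∏ i, (x i + h) ^ e i) * (1 + t) ^ ∑ i, e i := by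
  have hcoord (i : ι) : y i + h ≤ (x i + h) * (1 + t) :=
    add_le_add_mul_one_add (hx i) ht ((apply_le_add_norm_sub x y i).trans (by linarith))
  calc ∏ i, (y i + h) ^ e i
      ≤ ∏ i, ((x i + h) * (1 + t)) ^ e i :=
        prod_le_prod (fun i _ => by have := hy i; positivity)
          fun i _ => Real.rpow_le_rpow (by linarith [hy i]) (hcoord i) (he i)
    _ = (∏ i, (x i + h) ^ e i) * (1 + t) ^ ∑ i, e i :=
        Real.prod_mul_rpow _ (fun i _ => by linarith [hx i]) (by linarith) e

theorem stmt3 (d : ℕ) (α : Fin d → ℝ) (hα : ∀ i, 0 ≤ α i)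
    (n : ℝ) (hn : 1 ≤ n) (x y : Fin d → ℝ)
    (hx : ∀ i, 0 < x i) (hy : ∀ i, 0 < y i) :
    (∏ i, (y i + n ^ (-(1:ℝ)/2)) ^ (2*α i+1)) ≤
      (∏ i, (x i + n ^ (-(1:ℝ)/2)) ^ (2*α i+1)) *
        (1 + n ^ ((1:ℝ)/2) * ‖x - y‖) ^ (2*(∑ i, α i)+(d:ℝ)) := by
  have hn0 : 0 < n := one_pos.trans_le hn
  have hnorm : ‖x - y‖ = n ^ (-(1:ℝ)/2) * (n ^ ((1:ℝ)/2) * ‖x - y‖) := by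
    rw [← mul_assoc, ← Real.rpow_add hn0]
    norm_num
  have hexp : ∑ i, (2 * α i + 1) = 2 * ∑ i, α i + (d : ℝ) := by
    simp [sum_add_distrib, mul_sum]
  rw [← hexp]
  exact prod_add_rpow_le_mul_one_add_rpow (fun i => by linarith [hα i]) (by positivity)
    (by positivity) (fun i => (hx i).le) (fun i => (hy i).le) hnorm.le
end

section
/- If f : [a,b] → ℝ is twice differentiable with f''(u) ≥ ρ > 0 (or f''(u) ≤ -ρ < 0) on [a,b], then |Σ_{a ≤ n ≤ b} e^{2πi f(n)}| ≤ (|f'(b) - f'(a)| + 2)(4ρ^{-1/2} + C) for an absolute constant C, where the sum is over integers n in [a,b]. -/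
open scoped Real

/-!
Write `e x = exp (2πix)` and `Ψ n = f (n + 1) - f n`. By the mean value theorem the increments
`Ψ n` lie in `[f' a, f' b]` and grow by at least `ρ` per step. Cut the real line into bands that
alternately lie within `δ` of an integer and at distance at least `δ` from all integers; since `Ψ`
is increasing, the `n` with `Ψ n` in a given band form a block of consecutive integers. On a block
of the second kind the Kusmin–Landau inequality (partial summation against
`(e (Ψ n) - 1)⁻¹ = -1/2 - (i/2) cot (π Ψ n)`) bounds the sum by `1/δ + 1`; a block of the first
kind has at most `2δ/ρ + 1` terms. At most `2 (f' b - f' a) + 3` bands meet `[f' a, f' b]`, and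
`δ = min (√ρ) (1/2)` balances the two bounds. The concave case follows by complex conjugation.
-/

namespace VanDerCorput

open Finset fwdDiff

noncomputable def e (x : ℝ) : ℂ := Complex.exp (2 * π * Complex.I * x)

lemma e_eq (x : ℝ) : e x = Complex.exp (((2 * π * x : ℝ) : ℂ) * Complex.I) := by
  rw [e]; push_cast; ring_nf

lemma norm_e (x : ℝ) : ‖e x‖ = 1 := by
  rw [e_eq, Complex.norm_exp_ofReal_mul_I]

lemma e_add (x y : ℝ) : e (x + y) = e x * e y := by
  simp only [e, ← Complex.exp_add]; push_cast; ring_nf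

lemma e_sub_intCast (x : ℝ) (j : ℤ) : e (x - j) = e x := by
  rw [sub_eq_add_neg, e_add, e, e, Complex.ofReal_neg, Complex.ofReal_intCast,
    show 2 * (π : ℂ) * Complex.I * -(j : ℂ) = (-j : ℤ) * (2 * π * Complex.I) by push_cast; ring,
    Complex.exp_int_mul_two_pi_mul_I, mul_one]

lemma conj_e (x : ℝ) : (starRingEnd ℂ) (e x) = e (-x) := by
  rw [e, ← Complex.exp_conj]
  simp only [map_mul, Complex.conj_ofReal, Complex.conj_I, e, map_ofNat]
  push_cast; ring_nf

lemma norm_e_sub_one (t : ℝ) : ‖e t - 1‖ = 2 * |Real.sin (π * t)| := by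
  rw [e_eq, mul_comm, Complex.norm_exp_I_mul_ofReal_sub_one, norm_mul, Real.norm_eq_abs,
    Real.norm_eq_abs, abs_two]
  ring_nf

lemma inv_e_sub_one {t : ℝ} (h : Real.sin (π * t) ≠ 0) :
    (e t - 1)⁻¹ = -(1 / 2) - Complex.I / 2 * Real.cot (π * t) := by
  have hs : (Real.sin (π * t) : ℂ) ≠ 0 := by exact_mod_cast h
  have he : e t = Complex.exp (((2 * (π * t) : ℝ) : ℂ) * Complex.I) := by rw [e_eq]; ring_nf
  rw [he, Complex.exp_mul_I, ← Complex.ofReal_cos, ← Complex.ofReal_sin, Real.cos_two_mul',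
    Real.sin_two_mul, Real.cot_eq_cos_div_sin]
  have hpy : (Real.sin (π * t) : ℂ) ^ 2 + (Real.cos (π * t) : ℂ) ^ 2 = 1 := by
    exact_mod_cast Real.sin_sq_add_cos_sq (π * t)
  apply inv_eq_of_mul_eq_one_right
  push_cast at hs hpy ⊢
  field_simp
  linear_combination (Complex.sin (π * t) - Complex.I * Complex.cos (π * t)) * hpy
    - 2 * Complex.cos (π * t) ^ 2 * Complex.sin (π * t) * Complex.I_sq

lemma two_mul_le_sin_pi_mul {δ t : ℝ} (hδ : 0 ≤ δ) (ht : t ∈ Set.Icc δ (1 - δ)) :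
    2 * δ ≤ Real.sin (π * t) := by
  obtain ⟨h₁, h₂⟩ := ht
  have jordan : ∀ x, δ ≤ x → x ≤ 1 / 2 → 2 * δ ≤ Real.sin (π * x) := fun x hx hx' => by
    have := Real.mul_le_sin (x := π * x) (mul_nonneg Real.pi_pos.le (hδ.trans hx))
      (by nlinarith [Real.pi_pos])
    rw [show 2 / π * (π * x) = 2 * x by field_simp] at this
    linarith
  rcases le_total t (1 / 2) with h | h
  · exact jordan t h₁ h
  · rw [← Real.sin_pi_sub, show π - π * t = π * (1 - t) by ring]
    exact jordan (1 - t) (by linarith) (by linarith)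

lemma abs_cot_pi_mul_le {δ t : ℝ} (hδ : 0 < δ) (ht : t ∈ Set.Icc δ (1 - δ)) :
    |Real.cot (π * t)| ≤ 1 / (2 * δ) := by
  have hsin := two_mul_le_sin_pi_mul hδ.le ht
  rw [Real.cot_eq_cos_div_sin, abs_div, abs_of_pos (a := Real.sin _) (by linarith),
    div_le_div_iff₀ (by linarith) (by positivity)]
  nlinarith [Real.abs_cos_le_one (π * t)]

lemma sin_pi_mul_pos {t : ℝ} (h₀ : 0 < t) (h₁ : t < 1) : 0 < Real.sin (π * t) :=
  Real.sin_pos_of_pos_of_lt_pi (by positivity) (by nlinarith [Real.pi_pos])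

lemma cot_pi_mul_le_cot_pi_mul {s t : ℝ} (hs : 0 < s) (hst : s ≤ t) (ht : t < 1) :
    Real.cot (π * t) ≤ Real.cot (π * s) := by
  have := Real.sin_nonneg_of_nonneg_of_le_pi (x := π * t - π * s)
    (by nlinarith [Real.pi_pos]) (by nlinarith [Real.pi_pos])
  rw [Real.sin_sub] at this
  rw [Real.cot_eq_cos_div_sin, Real.cot_eq_cos_div_sin,
    div_le_div_iff₀ (sin_pi_mul_pos (hs.trans_le hst) ht) (sin_pi_mul_pos hs (hst.trans_lt ht))]
  linarith

lemma e_sub_one_ne_zero {t : ℝ} (h : Real.sin (π * t) ≠ 0) : e t - 1 ≠ 0 := by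
  rw [← norm_ne_zero_iff, norm_e_sub_one]
  simpa using h

lemma norm_inv_e_sub_one_le {δ t : ℝ} (hδ : 0 < δ) (ht : t ∈ Set.Icc δ (1 - δ)) :
    ‖(e t - 1)⁻¹‖ ≤ 1 / (4 * δ) := by
  have hsin := two_mul_le_sin_pi_mul hδ.le ht
  rw [norm_inv, norm_e_sub_one, abs_of_pos (by linarith), one_div]
  exact inv_anti₀ (by positivity) (by linarith)

lemma norm_inv_e_sub_one_sub_inv {s t : ℝ} (hs : 0 < s) (hst : s ≤ t) (ht : t < 1) :
    ‖(e s - 1)⁻¹ - (e t - 1)⁻¹‖ = (Real.cot (π * s) - Real.cot (π * t)) / 2 := by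
  rw [inv_e_sub_one (sin_pi_mul_pos hs (hst.trans_lt ht)).ne',
    inv_e_sub_one (sin_pi_mul_pos (hs.trans_le hst) ht).ne',
    show ∀ a b : ℝ, (-(1 / 2) - Complex.I / 2 * a) - (-(1 / 2) - Complex.I / 2 * b)
      = (((b - a) / 2 : ℝ) : ℂ) * Complex.I from fun a b => by push_cast; ring,
    norm_mul, Complex.norm_I, mul_one, Complex.norm_real, Real.norm_eq_abs,
    abs_of_nonpos (by linarith [cot_pi_mul_le_cot_pi_mul hs hst ht])]
  ring

theorem sum_range_succ_sub_mul_by_parts {R : Type*} [CommRing R] (z W : ℕ → R) (m : ℕ) :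
    ∑ i ∈ range (m + 1), (z (i + 1) - z i) * W i
      = z (m + 1) * W m - z 0 * W 0 + ∑ i ∈ range m, z (i + 1) * (W i - W (i + 1)) := by
  induction m with
  | zero => rw [sum_range_one, sum_range_zero]; ring
  | succ m ih => rw [sum_range_succ, ih, sum_range_succ]; ring

theorem norm_sum_range_le_kusmin_landau {φ : ℕ → ℝ} {δ : ℝ} {m : ℕ} (j : ℤ) (hδ : 0 < δ)
    (hθ : ∀ i < m, Δ_[1] φ i - j ∈ Set.Icc δ (1 - δ))
    (hmono : ∀ i, i + 1 < m → Δ_[1] φ i ≤ Δ_[1] φ (i + 1)) :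
    ‖∑ i ∈ range (m + 1), e (φ i)‖ ≤ 1 / δ + 1 := by
  cases m with
  | zero => simp only [zero_add, sum_range_one, norm_e]; linarith [one_div_pos.2 hδ]
  | succ k =>
  set θ : ℕ → ℝ := fun i => Δ_[1] φ i - j with hθ_def
  set W : ℕ → ℂ := fun i => (e (θ i) - 1)⁻¹ with hW_def
  have hstep : ∀ i < k + 1, e (φ i) = (e (φ (i + 1)) - e (φ i)) * W i := by
    intro i hi
    have hne := e_sub_one_ne_zero (by linarith [two_mul_le_sin_pi_mul hδ.le (hθ i hi)])
    have he : e (φ (i + 1)) = e (φ i) * e (θ i) := by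
      rw [hθ_def, e_sub_intCast, fwdDiff, ← e_add, add_sub_cancel]
    rw [he, ← mul_sub_one, mul_assoc, hW_def, mul_inv_cancel₀ hne, mul_one]
  have htel : ∑ i ∈ range k, ‖W i - W (i + 1)‖ ≤ 1 / (2 * δ) := by
    have hdiff : ∀ i ∈ range k,
        ‖W i - W (i + 1)‖ = (Real.cot (π * θ i) - Real.cot (π * θ (i + 1))) / 2 := by
      intro i hi
      have hi := mem_range.1 hi
      exact norm_inv_e_sub_one_sub_inv (hδ.trans_le (hθ i (by omega)).1)
        (sub_le_sub_right (hmono i (by omega)) _) (by linarith [(hθ (i + 1) (by omega)).2])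
    rw [sum_congr rfl hdiff, ← sum_div, sum_range_sub' (fun i => Real.cot (π * θ i))]
    have h₀ := abs_cot_pi_mul_le hδ (hθ 0 (by omega))
    have hk := abs_cot_pi_mul_le hδ (hθ k (by omega))
    linarith [le_abs_self (Real.cot (π * θ 0)), neg_abs_le (Real.cot (π * θ k))]
  rw [sum_range_succ, sum_congr rfl (fun i hi => hstep i (mem_range.1 hi)),
    sum_range_succ_sub_mul_by_parts (fun i => e (φ i)) W k]
  calc _ ≤ ‖W k‖ + ‖W 0‖ + ∑ i ∈ range k, ‖W i - W (i + 1)‖ + 1 := by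
        refine (norm_add_le _ _).trans (add_le_add ((norm_add_le _ _).trans (add_le_add
          ((norm_sub_le _ _).trans ?_) ((norm_sum_le _ _).trans ?_))) (norm_e _).le)
        · simp only [norm_mul, norm_e, one_mul, le_refl]
        · simp only [norm_mul, norm_e, one_mul, le_refl]
    _ ≤ 1 / (4 * δ) + 1 / (4 * δ) + 1 / (2 * δ) + 1 := by
        gcongr
        exacts [norm_inv_e_sub_one_le hδ (hθ k (by omega)),
          norm_inv_e_sub_one_le hδ (hθ 0 (by omega))]
    _ = 1 / δ + 1 := by field_simp; ring

/-- `bandIndex δ u = 2 j` for `u ∈ [j + δ, j + 1 - δ)` and `2 j + 1` for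
`u ∈ [j + 1 - δ, j + 1 + δ)` (when `0 ≤ δ ≤ 1/2`). -/
noncomputable def bandIndex (δ u : ℝ) : ℤ := ⌊u + δ⌋ + ⌊u - δ⌋

lemma bandIndex_mono (δ : ℝ) : Monotone (bandIndex δ) := fun _ _ huv =>
  add_le_add (Int.floor_mono (by linarith)) (Int.floor_mono (by linarith))

lemma floor_add_eq_floor_sub_or {δ : ℝ} (hδ : 0 ≤ δ) (hδ' : δ ≤ 1 / 2) (u : ℝ) :
    ⌊u + δ⌋ = ⌊u - δ⌋ ∨ ⌊u + δ⌋ = ⌊u - δ⌋ + 1 := by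
  have h₁ : ⌊u - δ⌋ ≤ ⌊u + δ⌋ := Int.floor_mono (by linarith)
  have h₂ : ⌊u + δ⌋ ≤ ⌊u - δ⌋ + 1 := by
    rw [← Int.floor_add_one]; exact Int.floor_mono (by linarith)
  omega

lemma sub_mem_Icc_of_bandIndex_eq_two_mul {δ u : ℝ} {j : ℤ} (hδ : 0 ≤ δ) (hδ' : δ ≤ 1 / 2)
    (h : bandIndex δ u = 2 * j) : u - j ∈ Set.Icc δ (1 - δ) := by
  have hj : ⌊u - δ⌋ = j ∧ ⌊u + δ⌋ = j := by
    rcases floor_add_eq_floor_sub_or hδ hδ' u with h' | h' <;> rw [bandIndex] at h <;> omega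
  have h₁ := Int.floor_le (u - δ)
  have h₂ := Int.lt_floor_add_one (u + δ)
  rw [hj.1] at h₁
  rw [hj.2] at h₂
  constructor <;> linarith

lemma mem_Ico_of_bandIndex_eq_two_mul_add_one {δ u : ℝ} {j : ℤ} (hδ : 0 ≤ δ)
    (hδ' : δ ≤ 1 / 2) (h : bandIndex δ u = 2 * j + 1) : u ∈ Set.Ico (j + 1 - δ) (j + 1 + δ) := by
  have hj : ⌊u - δ⌋ = j ∧ ⌊u + δ⌋ = j + 1 := by
    rcases floor_add_eq_floor_sub_or hδ hδ' u with h' | h' <;> rw [bandIndex] at h <;> omega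
  have h₁ := Int.floor_le (u + δ)
  have h₂ := Int.lt_floor_add_one (u - δ)
  rw [hj.2] at h₁
  rw [hj.1] at h₂
  push_cast at h₁
  constructor <;> linarith

lemma card_Icc_bandIndex_le (δ : ℝ) {α β : ℝ} (hαβ : α ≤ β) :
    (#(Icc (bandIndex δ α) (bandIndex δ β)) : ℝ) ≤ 2 * (β - α) + 3 := by
  have hmono := bandIndex_mono δ hαβ
  rw [Int.card_Icc, ← Int.cast_natCast, Int.toNat_of_nonneg (by omega)]
  have := Int.floor_le (β + δ)
  have := Int.floor_le (β - δ)
  have := Int.lt_floor_add_one (α + δ)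
  have := Int.lt_floor_add_one (α - δ)
  push_cast [bandIndex]
  linarith

theorem norm_sum_Icc_le_of_bandIndex_eq {φ : ℕ → ℝ} {ρ δ : ℝ} {p r : ℕ} {k : ℤ} (hρ : 0 < ρ)
    (hδ : 0 < δ) (hδ' : δ ≤ 1 / 2)
    (hspaced : ∀ i l, p ≤ i → i ≤ l → l ≤ r → Δ_[1] φ i + ρ * (l - i) ≤ Δ_[1] φ l)
    (hk : ∀ i ∈ Icc p r, bandIndex δ (Δ_[1] φ i) = k) :
    ‖∑ i ∈ Icc p r, e (φ i)‖ ≤ max (1 / δ + 1) (2 * δ / ρ + 1) := by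
  rcases lt_or_ge r p with hrp | hpr
  · rw [Icc_eq_empty_of_lt hrp, sum_empty, norm_zero]
    exact (by positivity : (0 : ℝ) ≤ 1 / δ + 1).trans (le_max_left _ _)
  obtain ⟨j, rfl | rfl⟩ := Int.even_or_odd' k
  · refine le_max_of_le_left ?_
    rw [← Ico_add_one_right_eq_Icc, sum_Ico_eq_sum_range, show r + 1 - p = r - p + 1 by omega]
    refine norm_sum_range_le_kusmin_landau (φ := fun i => φ (p + i)) j hδ (fun i hi => ?_)
      (fun i hi => ?_)
    · simpa only [fwdDiff, add_assoc] using sub_mem_Icc_of_bandIndex_eq_two_mul hδ.le hδ'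
        (hk (p + i) (mem_Icc.2 ⟨by omega, by omega⟩))
    · have := hspaced (p + i) (p + (i + 1)) (by omega) (by omega) (by omega)
      simp only [fwdDiff, ← add_assoc] at this ⊢
      push_cast at this
      nlinarith
  · refine le_max_of_le_right ?_
    have hp := mem_Ico_of_bandIndex_eq_two_mul_add_one hδ.le hδ' (hk p (mem_Icc.2 ⟨le_rfl, hpr⟩))
    have hr := mem_Ico_of_bandIndex_eq_two_mul_add_one hδ.le hδ' (hk r (mem_Icc.2 ⟨hpr, le_rfl⟩))
    have hgap := hspaced p r le_rfl hpr le_rfl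
    have hlen : ((r : ℝ) - p) < 2 * δ / ρ := by
      rw [lt_div_iff₀ hρ]; linarith [hp.1, hr.2]
    calc ‖∑ i ∈ Icc p r, e (φ i)‖ ≤ #(Icc p r) := (norm_sum_le _ _).trans (by simp [norm_e])
      _ = (r : ℝ) - p + 1 := by rw [Nat.card_Icc, Nat.cast_sub (by omega)]; push_cast; ring
      _ ≤ 2 * δ / ρ + 1 := by linarith

lemma filter_range_eq_Icc_of_monotoneOn {g : ℕ → ℤ} {n : ℕ} {k : ℤ}
    (hg : MonotoneOn g (Set.Iio n)) (h : ((range n).filter (g · = k)).Nonempty) :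
    (range n).filter (g · = k) = Icc (min' _ h) (max' _ h) := by
  ext i
  constructor
  · intro hi
    exact mem_Icc.2 ⟨min'_le _ _ hi, le_max' _ _ hi⟩
  · rw [mem_Icc]
    rintro ⟨h₁, h₂⟩
    obtain ⟨hp, hpk⟩ := mem_filter.1 (min'_mem _ h)
    obtain ⟨hr, hrk⟩ := mem_filter.1 (max'_mem _ h)
    have hi : i < n := h₂.trans_lt (mem_range.1 hr)
    refine mem_filter.2 ⟨mem_range.2 hi, le_antisymm ?_ ?_⟩
    · exact hrk ▸ hg hi (mem_range.1 hr) h₂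
    · exact hpk ▸ hg (mem_range.1 hp) hi h₁

theorem norm_sum_range_le_of_spaced {φ : ℕ → ℝ} {L : ℕ} {ρ δ α β : ℝ} (hρ : 0 < ρ) (hδ : 0 < δ)
    (hδ' : δ ≤ 1 / 2) (hαβ : α ≤ β) (hrange : ∀ i, i + 1 < L → Δ_[1] φ i ∈ Set.Icc α β)
    (hspaced : ∀ i l, i ≤ l → l + 1 < L → Δ_[1] φ i + ρ * (l - i) ≤ Δ_[1] φ l) :
    ‖∑ i ∈ range L, e (φ i)‖ ≤ (2 * (β - α) + 3) * max (1 / δ + 1) (2 * δ / ρ + 1) + 1 := by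
  set B := max (1 / δ + 1) (2 * δ / ρ + 1)
  have hB : 0 ≤ B := (by positivity : (0 : ℝ) ≤ 1 / δ + 1).trans (le_max_left _ _)
  have hcard := card_Icc_bandIndex_le δ hαβ
  cases L with
  | zero =>
    rw [sum_range_zero, norm_zero]
    nlinarith
  | succ L =>
  set κ : ℕ → ℤ := fun i => bandIndex δ (Δ_[1] φ i)
  have hκ : MonotoneOn κ (Set.Iio L) := fun i _ l hl hil => bandIndex_mono δ <| by
    have := hspaced i l hil (by simpa using hl)
    nlinarith [(Nat.cast_le (α := ℝ)).2 hil]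
  have hblock : ∀ k, ‖∑ i ∈ (range L).filter (κ · = k), e (φ i)‖ ≤ B := by
    intro k
    rcases ((range L).filter (κ · = k)).eq_empty_or_nonempty with h | h
    · rw [h, sum_empty, norm_zero]; exact hB
    have hmax := mem_range.1 (mem_filter.1 (max'_mem _ h)).1
    have hIcc := filter_range_eq_Icc_of_monotoneOn hκ h
    rw [hIcc]
    refine norm_sum_Icc_le_of_bandIndex_eq (k := k) hρ hδ hδ'
      (fun i l _ hil hl => hspaced i l hil (by omega)) (fun i hi => ?_)
    rw [← hIcc] at hi
    exact (mem_filter.1 hi).2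
  have hmaps : ∀ i ∈ range L, κ i ∈ Icc (bandIndex δ α) (bandIndex δ β) := fun i hi => by
    have := hrange i (by simpa using hi)
    exact mem_Icc.2 ⟨bandIndex_mono δ this.1, bandIndex_mono δ this.2⟩
  rw [sum_range_succ, ← sum_fiberwise_of_maps_to hmaps]
  calc _ ≤ ∑ k ∈ Icc (bandIndex δ α) (bandIndex δ β),
          ‖∑ i ∈ (range L).filter (κ · = k), e (φ i)‖ + 1 :=
        (norm_add_le _ _).trans (add_le_add (norm_sum_le _ _) (norm_e _).le)
    _ ≤ #(Icc (bandIndex δ α) (bandIndex δ β)) * B + 1 := by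
        gcongr
        exact (sum_le_card_nsmul _ _ _ (fun k _ => hblock k)).trans_eq (nsmul_eq_mul _ _)
    _ ≤ (2 * (β - α) + 3) * B + 1 := by gcongr

lemma mul_sub_le_sub_of_le_hasDerivAt {f f' : ℝ → ℝ} {a b C : ℝ}
    (hf : ∀ u ∈ Set.Icc a b, HasDerivAt f (f' u) u) (hC : ∀ u ∈ Set.Icc a b, C ≤ f' u)
    {u v : ℝ} (hu : a ≤ u) (huv : u ≤ v) (hv : v ≤ b) : C * (v - u) ≤ f v - f u :=
  (convex_Icc a b).mul_sub_le_image_sub_of_le_deriv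
    (fun x hx => (hf x hx).continuousAt.continuousWithinAt)
    (fun x hx => (hf x (interior_subset hx)).differentiableAt.differentiableWithinAt)
    (fun x hx => (hf x (interior_subset hx)).deriv ▸ hC x (interior_subset hx))
    u ⟨hu, huv.trans hv⟩ v ⟨hu.trans huv, hv⟩ huv

lemma sub_le_mul_sub_of_hasDerivAt_le {f f' : ℝ → ℝ} {a b C : ℝ}
    (hf : ∀ u ∈ Set.Icc a b, HasDerivAt f (f' u) u) (hC : ∀ u ∈ Set.Icc a b, f' u ≤ C)
    {u v : ℝ} (hu : a ≤ u) (huv : u ≤ v) (hv : v ≤ b) : f v - f u ≤ C * (v - u) := by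
  have := mul_sub_le_sub_of_le_hasDerivAt (f := fun x => -f x) (fun x hx => (hf x hx).neg)
    (fun x hx => neg_le_neg (hC x hx)) hu huv hv
  linarith

lemma max_le_two_mul_inv_add_three {s : ℝ} (hs : 0 < s) :
    max (1 / min s (1 / 2) + 1) (2 * min s (1 / 2) / s ^ 2 + 1) ≤ 2 * s⁻¹ + 3 := by
  have hinv := inv_pos.2 hs
  have h₁ : 1 / min s (1 / 2) ≤ s⁻¹ + 2 := by
    rcases min_cases s (1 / 2) with ⟨h, -⟩ | ⟨h, -⟩ <;> rw [h]
    · rw [one_div]; linarith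
    · norm_num; linarith
  have h₂ : 2 * min s (1 / 2) / s ^ 2 ≤ 2 * s⁻¹ := by
    rw [div_le_iff₀ (by positivity), mul_assoc, pow_two, ← mul_assoc s⁻¹, inv_mul_cancel₀ hs.ne',
      one_mul]
    linarith [min_le_left s (1 / 2)]
  exact max_le (by linarith) (by linarith)

lemma increment_mem_Icc_of_monotoneOn {f f' : ℝ → ℝ} {a b u : ℝ}
    (hf : ∀ x ∈ Set.Icc a b, HasDerivAt f (f' x) x) (hf' : MonotoneOn f' (Set.Icc a b))
    (hu : a ≤ u) (hu' : u + 1 ≤ b) : f (u + 1) - f u ∈ Set.Icc (f' a) (f' b) := by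
  have hab : a ≤ b := by linarith
  constructor
  · simpa using mul_sub_le_sub_of_le_hasDerivAt hf
      (fun x hx => hf' ⟨le_rfl, hab⟩ hx hx.1) hu (by linarith) hu'
  · simpa using sub_le_mul_sub_of_hasDerivAt_le hf
      (fun x hx => hf' hx ⟨hab, le_rfl⟩ hx.2) hu (by linarith) hu'

lemma increment_add_mul_le_increment {f f' f'' : ℝ → ℝ} {a b ρ u v : ℝ}
    (hf : ∀ x ∈ Set.Icc a b, HasDerivAt f (f' x) x)
    (hf' : ∀ x ∈ Set.Icc a b, HasDerivAt f' (f'' x) x) (hf'' : ∀ x ∈ Set.Icc a b, ρ ≤ f'' x)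
    (hu : a ≤ u) (huv : u ≤ v) (hv : v + 1 ≤ b) :
    f (u + 1) - f u + ρ * (v - u) ≤ f (v + 1) - f v := by
  have hderiv : ∀ x ∈ Set.Icc a (b - 1),
      HasDerivAt (fun y => f (y + 1) - f y) (f' (x + 1) - f' x) x := fun x hx =>
    ((hf (x + 1) ⟨by linarith [hx.1], by linarith [hx.2]⟩).comp_add_const x 1).sub
      (hf x ⟨hx.1, by linarith [hx.2]⟩)
  have hslope : ∀ x ∈ Set.Icc a (b - 1), ρ ≤ f' (x + 1) - f' x := fun x hx => by
    simpa using mul_sub_le_sub_of_le_hasDerivAt hf' hf'' hx.1 (by linarith)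
      (by linarith [hx.2] : x + 1 ≤ b)
  have := mul_sub_le_sub_of_le_hasDerivAt hderiv hslope hu huv (by linarith)
  linarith

theorem norm_sum_e_le_of_le_second_deriv {a b ρ : ℝ} {f f' f'' : ℝ → ℝ} (hab : a ≤ b)
    (hρ : 0 < ρ) (hf : ∀ u ∈ Set.Icc a b, HasDerivAt f (f' u) u)
    (hf' : ∀ u ∈ Set.Icc a b, HasDerivAt f' (f'' u) u) (hf'' : ∀ u ∈ Set.Icc a b, ρ ≤ f'' u) :
    ‖∑ n ∈ Icc ⌈a⌉ ⌊b⌋, e (f n)‖ ≤ (|f' b - f' a| + 2) * (4 * ρ ^ (-(1 : ℝ) / 2) + 6) := by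
  have hf'_mono : MonotoneOn f' (Set.Icc a b) := fun u hu v hv huv => by
    nlinarith [mul_sub_le_sub_of_le_hasDerivAt hf' hf'' hu.1 huv hv.2]
  have hΔ : 0 ≤ f' b - f' a := sub_nonneg.2 (hf'_mono ⟨le_rfl, hab⟩ ⟨hab, le_rfl⟩ hab)
  set M := ⌈a⌉
  have hindex : ∀ i : ℕ, i + 1 < (⌊b⌋ + 1 - M).toNat → a ≤ M + i ∧ (M : ℝ) + i + 1 ≤ b := by
    intro i hi
    have : ((M + i + 1 : ℤ) : ℝ) ≤ ⌊b⌋ := by exact_mod_cast (by omega : M + i + 1 ≤ ⌊b⌋)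
    push_cast at this
    exact ⟨(Int.le_ceil a).trans (le_add_of_nonneg_right (Nat.cast_nonneg i)),
      this.trans (Int.floor_le b)⟩
  have hsum := norm_sum_range_le_of_spaced (φ := fun i : ℕ => f (M + i))
    (L := (⌊b⌋ + 1 - M).toNat) hρ (lt_min (Real.sqrt_pos.2 hρ) one_half_pos) (min_le_right _ _)
    (sub_nonneg.1 hΔ)
    (fun i hi => by
      simpa [fwdDiff, add_assoc] using increment_mem_Icc_of_monotoneOn hf hf'_mono
        (hindex i hi).1 (by linarith [(hindex i hi).2]))
    (fun i l hil hl => by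
      simpa [fwdDiff, add_assoc] using increment_add_mul_le_increment (u := M + i) (v := M + l)
        hf hf' hf'' (hindex i (by omega)).1 (by gcongr) (by linarith [(hindex l hl).2]))
  have hB := max_le_two_mul_inv_add_three (Real.sqrt_pos.2 hρ)
  rw [Real.sq_sqrt hρ.le] at hB
  have hrpow : ρ ^ (-(1 : ℝ) / 2) = (√ρ)⁻¹ := by
    rw [neg_div, Real.rpow_neg hρ.le, ← Real.sqrt_eq_rpow]
  rw [Int.Icc_eq_finset_map, sum_map, abs_of_nonneg hΔ, hrpow]
  simp only [Function.Embedding.trans_apply, Nat.castEmbedding_apply, addLeftEmbedding_apply,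
    Int.cast_add, Int.cast_natCast]
  refine hsum.trans ?_
  have := inv_pos.2 (Real.sqrt_pos.2 hρ)
  nlinarith [mul_le_mul_of_nonneg_left hB (by linarith : (0 : ℝ) ≤ 2 * (f' b - f' a) + 3)]

end VanDerCorput

theorem stmt5 :
    ∃ C : ℝ, ∀ (a b ρ : ℝ) (f f' f'' : ℝ → ℝ), a < b → 0 < ρ →
      (∀ u ∈ Set.Icc a b, HasDerivAt f (f' u) u) →
      (∀ u ∈ Set.Icc a b, HasDerivAt f' (f'' u) u) →
      ((∀ u ∈ Set.Icc a b, ρ ≤ f'' u) ∨ (∀ u ∈ Set.Icc a b, f'' u ≤ -ρ)) →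
      ‖∑ n ∈ Finset.Icc ⌈a⌉ ⌊b⌋,
          Complex.exp (2 * Real.pi * Complex.I * (f (n:ℝ) : ℂ))‖
        ≤ (|f' b - f' a| + 2) * (4 * ρ ^ (-(1:ℝ)/2) + C) := by
  refine ⟨6, fun a b ρ f f' f'' hab hρ hf hf' hf'' => ?_⟩
  rcases hf'' with hconvex | hconcave
  · exact VanDerCorput.norm_sum_e_le_of_le_second_deriv hab.le hρ hf hf' hconvex
  · have hneg := VanDerCorput.norm_sum_e_le_of_le_second_deriv hab.le hρ
      (fun u hu => (hf u hu).neg) (fun u hu => (hf' u hu).neg)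
      (fun u hu => le_neg.2 (hconcave u hu))
    rw [neg_sub_neg, abs_sub_comm, ← Complex.norm_conj, map_sum] at hneg
    simp only [VanDerCorput.conj_e, Pi.neg_apply, neg_neg] at hneg
    exact hneg
end

section
/- Let λ > d and let X ⊂ ℝ^d be a set of points with pairwise ℓ^∞-distances ≥ c₀ 2^{-j} for some c₀ > 0. Then there is a constant c depending only on d, λ, c₀ such that for all ξ, ω ∈ ℝ^d: Σ_{η ∈ X} 1/((1 + 2^j ‖ξ-η‖)^λ (1 + 2^j ‖η-ω‖)^λ) ≤ c/(1 + 2^j ‖ξ-ω‖)^λ, where ‖·‖ is the ℓ^∞ norm. -/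
open Finset in
lemma aux_floor_ne {a b : ℝ} (h : 2 ≤ |a - b|) : ⌊a⌋ ≠ ⌊b⌋ := by
  intro he
  have h1 := Int.floor_le a
  have h2 := Int.lt_floor_add_one a
  have h3 := Int.floor_le b
  have h4 := Int.lt_floor_add_one b
  rw [he] at h1 h2
  rcases abs_cases (a - b) with ⟨h5, _⟩ | ⟨h5, _⟩ <;> linarith

open Finset in
lemma aux_count (d : ℕ) (δ R : ℝ) (hδ : 0 < δ) (hR : 0 ≤ R) (ω : Fin d → ℝ)
    (F : Finset (Fin d → ℝ))
    (hsep : ∀ η₁ ∈ F, ∀ η₂ ∈ F, η₁ ≠ η₂ → δ ≤ ‖η₁ - η₂‖)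
    (hRb : ∀ η ∈ F, ‖η - ω‖ ≤ R) :
    (F.card : ℝ) ≤ (4 * R / δ + 5) ^ d := by
  classical
  set N : ℕ := ⌈2 * R / δ⌉₊ + 1 with hN
  set g : (Fin d → ℝ) → (Fin d → ℤ) := fun η i => ⌊2 * (η i - ω i) / δ⌋ with hg
  -- g is injective on F
  have hinj : Set.InjOn g F := by
    intro η₁ h₁ η₂ h₂ he
    by_contra hne
    have hs := hsep η₁ h₁ η₂ h₂ hne
    have : ∃ i, δ ≤ |η₁ i - η₂ i| := by
      by_contra hc
      push_neg at hc
      have : ‖η₁ - η₂‖ < δ := by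
        rw [pi_norm_lt_iff hδ]
        intro i
        simpa [Real.norm_eq_abs] using hc i
      linarith
    obtain ⟨i, hi⟩ := this
    have habs : 2 ≤ |2 * (η₁ i - ω i) / δ - 2 * (η₂ i - ω i) / δ| := by
      have : 2 * (η₁ i - ω i) / δ - 2 * (η₂ i - ω i) / δ = 2 * (η₁ i - η₂ i) / δ := by
        ring
      rw [this, abs_div, abs_of_pos hδ, le_div_iff₀ hδ, abs_mul]
      rw [abs_of_pos (by norm_num : (0:ℝ) < 2)]
      nlinarith [abs_nonneg (η₁ i - η₂ i)]
    exact aux_floor_ne habs (congrFun he i)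
  -- g maps F into a box
  have hbox : ∀ η ∈ F, g η ∈ Finset.Icc (fun _ : Fin d => -(N:ℤ)) (fun _ => (N:ℤ)) := by
    intro η hη
    rw [Finset.mem_Icc]
    constructor <;> intro i
    all_goals
      have hco : |η i - ω i| ≤ R := by
        have := norm_le_pi_norm (η - ω) i
        simp only [Pi.sub_apply, Real.norm_eq_abs] at this
        exact this.trans (hRb η hη)
      have ht : |2 * (η i - ω i) / δ| ≤ 2 * R / δ := by
        rw [abs_div, abs_of_pos hδ, div_le_div_iff_of_pos_right hδ, abs_mul,
          abs_of_pos (by norm_num : (0:ℝ) < 2)]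
        nlinarith
      have hceil : 2 * R / δ ≤ ((⌈2 * R / δ⌉₊ : ℝ)) := Nat.le_ceil _
      rw [abs_le] at ht
    · -- -N ≤ floor
      have : -(N:ℝ) ≤ 2 * (η i - ω i) / δ - 1 + 1 - 1 := by
        push_cast [hN]; linarith
      have h2 : ((-(N:ℤ) : ℤ) : ℝ) ≤ (⌊2 * (η i - ω i) / δ⌋ : ℝ) := by
        push_cast
        have := Int.sub_one_lt_floor (2 * (η i - ω i) / δ)
        linarith
      exact_mod_cast h2
    · have h2 : ((⌊2 * (η i - ω i) / δ⌋ : ℤ) : ℝ) ≤ ((N:ℤ) : ℝ) := by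
        have := Int.floor_le (2 * (η i - ω i) / δ)
        push_cast [hN]
        linarith
      exact_mod_cast h2
  have hcard : F.card ≤ (2 * N + 1) ^ d := by
    rw [← Finset.card_image_of_injOn hinj]
    calc (F.image g).card ≤ (Finset.Icc (fun _ : Fin d => -(N:ℤ)) (fun _ => (N:ℤ))).card :=
        Finset.card_le_card (fun v hv => by
          obtain ⟨η, hη, rfl⟩ := Finset.mem_image.mp hv
          exact hbox η hη)
      _ = (2 * N + 1) ^ d := by
          rw [Pi.card_Icc]
          have : (Finset.Icc (-(N:ℤ)) (N:ℤ)).card = 2 * N + 1 := by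
            rw [Int.card_Icc]; omega
          simp only [this, Finset.prod_const, Finset.card_univ, Fintype.card_fin]
  have hNle : ((2 * N + 1 : ℕ) : ℝ) ≤ 4 * R / δ + 5 := by
    have h1 : ((⌈2 * R / δ⌉₊ : ℝ)) < 2 * R / δ + 1 :=
      Nat.ceil_lt_add_one (by positivity)
    push_cast [hN]
    have h2 : 4 * R / δ = 2 * (2 * R / δ) := by ring
    linarith
  calc (F.card : ℝ) ≤ (((2 * N + 1) ^ d : ℕ) : ℝ) := Nat.cast_le.mpr hcard
    _ = ((2 * N + 1 : ℕ) : ℝ) ^ d := by push_cast; ring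
    _ ≤ (4 * R / δ + 5) ^ d := pow_le_pow_left₀ (by positivity) hNle d
lemma aux_geom (r : ℝ) (hr0 : 0 ≤ r) (hr1 : r < 1) (n : ℕ) :
    ∑ i ∈ Finset.range n, r ^ i ≤ (1 - r)⁻¹ := by
  rw [geom_sum_eq hr1.ne n, div_le_iff_of_neg (by linarith : r - 1 < 0)]
  have h : (1 - r)⁻¹ * (r - 1) = -1 := by
    rw [inv_mul_eq_div, div_eq_iff (by linarith : (1:ℝ) - r ≠ 0)]
    ring
  rw [h]
  have : (0:ℝ) ≤ r ^ n := by positivity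
  linarith

lemma aux_sumB (d : ℕ) (lam c₀ : ℝ) (hlam : (d:ℝ) < lam) (hc₀ : 0 < c₀)
    (j : ℕ) (ω : Fin d → ℝ) (F : Finset (Fin d → ℝ))
    (hsep : ∀ η₁ ∈ F, ∀ η₂ ∈ F, η₁ ≠ η₂ → c₀ * (2:ℝ) ^ (-(j:ℝ)) ≤ ‖η₁ - η₂‖) :
    ∑ η ∈ F, 1 / (1 + 2^j * ‖η - ω‖) ^ lam ≤
      (8 / c₀ + 5) ^ d * (1 - (2:ℝ) ^ ((d:ℝ) - lam))⁻¹ := by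
  classical
  have hlam0 : 0 < lam := lt_of_le_of_lt (Nat.cast_nonneg d) hlam
  set r : ℝ := (2:ℝ) ^ ((d:ℝ) - lam) with hrdef
  have hr0 : 0 < r := Real.rpow_pos_of_pos (by norm_num) _
  have hr1 : r < 1 := Real.rpow_lt_one_of_one_lt_of_neg (by norm_num) (by linarith)
  set K : ℝ := 8 / c₀ + 5 with hKdef
  have hK0 : 0 < K := by positivity
  set δ : ℝ := c₀ * (2:ℝ) ^ (-(j:ℝ)) with hδdef
  have hδ : 0 < δ := by
    have := Real.rpow_pos_of_pos (by norm_num : (0:ℝ) < 2) (-(j:ℝ))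
    positivity
  have hδeq : δ = c₀ / 2 ^ j := by
    rw [hδdef, Real.rpow_neg (by norm_num), Real.rpow_natCast]
    ring
  have h2j : (0:ℝ) < 2 ^ j := by positivity
  set mfun : (Fin d → ℝ) → ℕ := fun η => ⌊Real.logb 2 (1 + 2^j * ‖η - ω‖)⌋₊ with hmfun
  have hA1 : ∀ η : Fin d → ℝ, (1:ℝ) ≤ 1 + 2^j * ‖η - ω‖ := fun η => by
    have : (0:ℝ) ≤ 2^j * ‖η - ω‖ := by positivity
    linarith
  have key1 : ∀ η : Fin d → ℝ, (2:ℝ) ^ (mfun η) ≤ 1 + 2^j * ‖η - ω‖ := by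
    intro η
    set A := 1 + 2^j * ‖η - ω‖
    have hA : (1:ℝ) ≤ A := hA1 η
    have hlog : (0:ℝ) ≤ Real.logb 2 A := Real.logb_nonneg (by norm_num) hA
    have h1 : ((mfun η : ℕ) : ℝ) ≤ Real.logb 2 A := Nat.floor_le hlog
    calc (2:ℝ) ^ (mfun η) = (2:ℝ) ^ ((mfun η : ℕ) : ℝ) := (Real.rpow_natCast 2 _).symm
      _ ≤ (2:ℝ) ^ (Real.logb 2 A) := Real.rpow_le_rpow_of_exponent_le (by norm_num) h1
      _ = A := Real.rpow_logb (by norm_num) (by norm_num) (by linarith)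
  have key2 : ∀ η : Fin d → ℝ, 1 + 2^j * ‖η - ω‖ < (2:ℝ) ^ (mfun η + 1) := by
    intro η
    set A := 1 + 2^j * ‖η - ω‖
    have hA : (1:ℝ) ≤ A := hA1 η
    have h1 : Real.logb 2 A < ((mfun η : ℕ) : ℝ) + 1 := Nat.lt_floor_add_one _
    calc A = (2:ℝ) ^ (Real.logb 2 A) := (Real.rpow_logb (by norm_num) (by norm_num) (by linarith)).symm
      _ < (2:ℝ) ^ (((mfun η : ℕ) : ℝ) + 1) := by
          apply Real.rpow_lt_rpow_of_exponent_lt (by norm_num) h1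
      _ = (2:ℝ) ^ (mfun η + 1) := by
          rw [show ((mfun η : ℕ) : ℝ) + 1 = ((mfun η + 1 : ℕ) : ℝ) by push_cast; ring,
            Real.rpow_natCast]
  set T := F.image mfun with hT
  have hfib := Finset.sum_fiberwise_of_maps_to (s := F) (t := T) (g := mfun)
    (fun η hη => Finset.mem_image_of_mem mfun hη) (fun η => 1 / (1 + 2^j * ‖η - ω‖) ^ lam)
  rw [← hfib]
  have hinner : ∀ m ∈ T, (∑ η ∈ F.filter (fun η => mfun η = m),
      1 / (1 + 2^j * ‖η - ω‖) ^ lam) ≤ K ^ d * r ^ m := by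
    intro m hm
    set G := F.filter (fun η => mfun η = m) with hG
    have hGsub : G ⊆ F := Finset.filter_subset _ _
    set P : ℝ := (2:ℝ) ^ m with hP
    have hP0 : (0:ℝ) < P := by positivity
    have hterm : ∀ η ∈ G, 1 / (1 + 2^j * ‖η - ω‖) ^ lam ≤ 1 / P ^ lam := by
      intro η hη
      have h1 := key1 η
      have hmη : mfun η = m := (Finset.mem_filter.mp hη).2
      rw [hmη] at h1
      apply one_div_le_one_div_of_le
      · exact Real.rpow_pos_of_pos hP0 lam
      · exact Real.rpow_le_rpow hP0.le h1 hlam0.le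
    have hsum1 : (∑ η ∈ G, 1 / (1 + 2^j * ‖η - ω‖) ^ lam) ≤ (G.card : ℝ) * (1 / P ^ lam) := by
      calc (∑ η ∈ G, 1 / (1 + 2^j * ‖η - ω‖) ^ lam) ≤ ∑ η ∈ G, 1 / P ^ lam :=
          Finset.sum_le_sum hterm
        _ = (G.card : ℝ) * (1 / P ^ lam) := by rw [Finset.sum_const, nsmul_eq_mul]
    set R : ℝ := (2:ℝ) ^ (m + 1) / 2 ^ j with hR
    have hR0 : (0:ℝ) ≤ R := by positivity
    have hcard : (G.card : ℝ) ≤ (4 * R / δ + 5) ^ d := by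
      apply aux_count d δ R hδ hR0 ω G
      · intro η₁ h₁ η₂ h₂ hne
        exact hsep η₁ (hGsub h₁) η₂ (hGsub h₂) hne
      · intro η hη
        have h2 := key2 η
        have hmη : mfun η = m := (Finset.mem_filter.mp hη).2
        rw [hmη] at h2
        rw [hR, le_div_iff₀ h2j]
        have : (0:ℝ) ≤ 2^j * ‖η - ω‖ := by positivity
        nlinarith [norm_nonneg (η - ω)]
    have hbase : 4 * R / δ + 5 ≤ (2:ℝ) ^ m * K := by
      have he : 4 * R / δ = 2 ^ m * (8 / c₀) := by
        rw [hR, hδeq]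
        field_simp
        ring
      rw [he, hKdef]
      have h2m : (1:ℝ) ≤ 2 ^ m := one_le_pow₀ (by norm_num)
      nlinarith
    have hcard2 : (G.card : ℝ) ≤ ((2:ℝ) ^ m) ^ d * K ^ d := by
      calc (G.card : ℝ) ≤ (4 * R / δ + 5) ^ d := hcard
        _ ≤ ((2:ℝ) ^ m * K) ^ d := by
            apply pow_le_pow_left₀ (by positivity) hbase
        _ = ((2:ℝ) ^ m) ^ d * K ^ d := mul_pow _ _ _
    have hpr : ((2:ℝ) ^ m) ^ d * (1 / P ^ lam) = r ^ m := by
      rw [hP, hrdef, one_div]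
      rw [← Real.rpow_natCast (2:ℝ) m]
      rw [← Real.rpow_natCast ((2:ℝ) ^ ((m:ℕ):ℝ)) d]
      rw [← Real.rpow_mul (by norm_num : (0:ℝ) ≤ 2)]
      rw [← Real.rpow_mul (by norm_num : (0:ℝ) ≤ 2)]
      rw [← Real.rpow_neg (by positivity)]
      rw [← Real.rpow_add (by norm_num : (0:ℝ) < 2)]
      rw [show (m:ℝ) * (d:ℝ) + -((m:ℝ) * lam) = ((d:ℝ) - lam) * (m:ℝ) by ring]
      rw [Real.rpow_mul (by norm_num : (0:ℝ) ≤ 2), Real.rpow_natCast]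
    calc (∑ η ∈ G, 1 / (1 + 2^j * ‖η - ω‖) ^ lam) ≤ (G.card : ℝ) * (1 / P ^ lam) := hsum1
      _ ≤ ((2:ℝ) ^ m) ^ d * K ^ d * (1 / P ^ lam) := by
          apply mul_le_mul_of_nonneg_right hcard2 (by positivity)
      _ = K ^ d * (((2:ℝ) ^ m) ^ d * (1 / P ^ lam)) := by ring
      _ = K ^ d * r ^ m := by rw [hpr]
  have hgeomT : (∑ m ∈ T, r ^ m) ≤ (1 - r)⁻¹ := by
    calc (∑ m ∈ T, r ^ m) ≤ ∑ m ∈ Finset.range ((T.sup id) + 1), r ^ m :=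
        Finset.sum_le_sum_of_subset_of_nonneg (Finset.subset_range_sup_succ T)
          (fun i _ _ => by positivity)
      _ ≤ (1 - r)⁻¹ := aux_geom r hr0.le hr1 _
  calc (∑ m ∈ T, ∑ η ∈ F.filter (fun η => mfun η = m), 1 / (1 + 2^j * ‖η - ω‖) ^ lam)
      ≤ ∑ m ∈ T, K ^ d * r ^ m := Finset.sum_le_sum hinner
    _ = K ^ d * ∑ m ∈ T, r ^ m := by rw [Finset.mul_sum]
    _ ≤ K ^ d * (1 - r)⁻¹ := mul_le_mul_of_nonneg_left hgeomT (by positivity)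
theorem stmt15 (d : ℕ) (hd : 0 < d) (lam c₀ : ℝ) (hlam : (d:ℝ) < lam) (hc₀ : 0 < c₀) :
    ∃ c : ℝ, ∀ (j : ℕ) (X : Set (Fin d → ℝ)),
      (∀ η₁ ∈ X, ∀ η₂ ∈ X, η₁ ≠ η₂ → c₀ * (2:ℝ) ^ (-(j:ℝ)) ≤ ‖η₁ - η₂‖) →
      ∀ ξ ω : Fin d → ℝ,
        (∑' η : X, 1 / ((1 + 2^j * ‖ξ - (η:Fin d → ℝ)‖) ^ lam *
            (1 + 2^j * ‖(η:Fin d → ℝ) - ω‖) ^ lam))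
          ≤ c / (1 + 2^j * ‖ξ - ω‖) ^ lam := by
  classical
  have hlam0 : 0 < lam := lt_of_le_of_lt (Nat.cast_nonneg d) hlam
  set C₂ : ℝ := (8 / c₀ + 5) ^ d * (1 - (2:ℝ) ^ ((d:ℝ) - lam))⁻¹ with hC2
  have hr1 : (2:ℝ) ^ ((d:ℝ) - lam) < 1 :=
    Real.rpow_lt_one_of_one_lt_of_neg (by norm_num) (by linarith)
  have hC2nonneg : 0 ≤ C₂ := by
    have h1 : (0:ℝ) < 1 - (2:ℝ) ^ ((d:ℝ) - lam) := by linarith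
    have h2 : (0:ℝ) ≤ (8 / c₀ + 5) ^ d := by positivity
    positivity
  have h2l : (0:ℝ) < (2:ℝ) ^ lam := Real.rpow_pos_of_pos (by norm_num) _
  refine ⟨2 * (2:ℝ) ^ lam * C₂, ?_⟩
  intro j X hX ξ ω
  have h2j : (0:ℝ) < 2 ^ j := by positivity
  set S : ℝ := 1 + 2 ^ j * ‖ξ - ω‖ with hSdef
  have hS0 : (0:ℝ) < S := by
    have : (0:ℝ) ≤ 2 ^ j * ‖ξ - ω‖ := by positivity
    rw [hSdef]; linarith
  have hSl : (0:ℝ) < S ^ lam := Real.rpow_pos_of_pos hS0 _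
  apply tsum_le_of_sum_le'
  · apply div_nonneg _ hSl.le
    have : (0:ℝ) ≤ (2:ℝ) ^ lam := h2l.le
    positivity
  intro s
  set F : Finset (Fin d → ℝ) := s.image Subtype.val with hF
  have hmemX : ∀ η ∈ F, η ∈ X := by
    intro η hη
    obtain ⟨x, _, rfl⟩ := Finset.mem_image.mp hη
    exact x.2
  have hsepF : ∀ η₁ ∈ F, ∀ η₂ ∈ F, η₁ ≠ η₂ → c₀ * (2:ℝ) ^ (-(j:ℝ)) ≤ ‖η₁ - η₂‖ :=
    fun η₁ h₁ η₂ h₂ hne => hX η₁ (hmemX η₁ h₁) η₂ (hmemX η₂ h₂) hne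
  have hsum_eq : (∑ η ∈ s, 1 / ((1 + 2^j * ‖ξ - (η:Fin d → ℝ)‖) ^ lam *
        (1 + 2^j * ‖(η:Fin d → ℝ) - ω‖) ^ lam))
      = ∑ η ∈ F, 1 / ((1 + 2^j * ‖ξ - η‖) ^ lam * (1 + 2^j * ‖η - ω‖) ^ lam) := by
    rw [hF, Finset.sum_image (fun x _ y _ h => Subtype.ext h)]
  rw [hsum_eq]
  -- pointwise bound
  have hpt : ∀ η ∈ F, 1 / ((1 + 2^j * ‖ξ - η‖) ^ lam * (1 + 2^j * ‖η - ω‖) ^ lam) ≤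
      (2:ℝ) ^ lam / S ^ lam *
        (1 / (1 + 2^j * ‖η - ξ‖) ^ lam + 1 / (1 + 2^j * ‖η - ω‖) ^ lam) := by
    intro η _
    have hAA : ‖η - ξ‖ = ‖ξ - η‖ := norm_sub_rev _ _
    rw [hAA]
    set a : ℝ := ‖ξ - η‖ with ha
    set b : ℝ := ‖η - ω‖ with hb
    set A : ℝ := 1 + 2 ^ j * a with hA
    set B : ℝ := 1 + 2 ^ j * b with hB
    have ha0 : 0 ≤ a := norm_nonneg _
    have hb0 : 0 ≤ b := norm_nonneg _
    have hA0 : (0:ℝ) < A := by rw [hA]; nlinarith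
    have hB0 : (0:ℝ) < B := by rw [hB]; nlinarith
    have hAl : (0:ℝ) < A ^ lam := Real.rpow_pos_of_pos hA0 _
    have hBl : (0:ℝ) < B ^ lam := Real.rpow_pos_of_pos hB0 _
    have htri : ‖ξ - ω‖ ≤ a + b := by
      have he : ξ - ω = (ξ - η) + (η - ω) := by abel
      rw [he]
      exact norm_add_le _ _
    have hcase : S / 2 ≤ A ∨ S / 2 ≤ B := by
      by_contra hc
      push_neg at hc
      have h1 : 2 ^ j * ‖ξ - ω‖ ≤ 2 ^ j * (a + b) :=
        mul_le_mul_of_nonneg_left htri h2j.le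
      rw [hSdef] at hc
      rw [hA, hB] at hc
      obtain ⟨hc1, hc2⟩ := hc
      nlinarith
    have hfactor : ∀ C D : ℝ, 0 < C → 0 < D → S / 2 ≤ C →
        1 / (C ^ lam * D ^ lam) ≤ (2:ℝ) ^ lam / S ^ lam * (1 / D ^ lam) := by
      intro C D hC hD hSC
      have hCl : (0:ℝ) < C ^ lam := Real.rpow_pos_of_pos hC _
      have hDl : (0:ℝ) < D ^ lam := Real.rpow_pos_of_pos hD _
      have h1 : S ^ lam / (2:ℝ) ^ lam ≤ C ^ lam := by
        rw [← Real.div_rpow hS0.le (by norm_num : (0:ℝ) ≤ 2)]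
        exact Real.rpow_le_rpow (by positivity) hSC hlam0.le
      have h2 : S ^ lam / (2:ℝ) ^ lam * D ^ lam ≤ C ^ lam * D ^ lam :=
        mul_le_mul_of_nonneg_right h1 hDl.le
      have h3 : 1 / (C ^ lam * D ^ lam) ≤ 1 / (S ^ lam / (2:ℝ) ^ lam * D ^ lam) :=
        one_div_le_one_div_of_le (by positivity) h2
      calc 1 / (C ^ lam * D ^ lam) ≤ 1 / (S ^ lam / (2:ℝ) ^ lam * D ^ lam) := h3
        _ = (2:ℝ) ^ lam / S ^ lam * (1 / D ^ lam) := by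
            field_simp
    rcases hcase with hca | hcb
    · calc 1 / (A ^ lam * B ^ lam) ≤ (2:ℝ) ^ lam / S ^ lam * (1 / B ^ lam) :=
          hfactor A B hA0 hB0 hca
        _ ≤ (2:ℝ) ^ lam / S ^ lam * (1 / A ^ lam + 1 / B ^ lam) := by
            apply mul_le_mul_of_nonneg_left _ (by positivity)
            have : (0:ℝ) ≤ 1 / A ^ lam := by positivity
            linarith
    · have hcomm : A ^ lam * B ^ lam = B ^ lam * A ^ lam := mul_comm _ _
      calc 1 / (A ^ lam * B ^ lam) = 1 / (B ^ lam * A ^ lam) := by rw [hcomm]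
        _ ≤ (2:ℝ) ^ lam / S ^ lam * (1 / A ^ lam) := hfactor B A hB0 hA0 hcb
        _ ≤ (2:ℝ) ^ lam / S ^ lam * (1 / A ^ lam + 1 / B ^ lam) := by
            apply mul_le_mul_of_nonneg_left _ (by positivity)
            have : (0:ℝ) ≤ 1 / B ^ lam := by positivity
            linarith
  have hsum1 : (∑ η ∈ F, 1 / (1 + 2^j * ‖η - ξ‖) ^ lam) ≤ C₂ :=
    aux_sumB d lam c₀ hlam hc₀ j ξ F hsepF
  have hsum2 : (∑ η ∈ F, 1 / (1 + 2^j * ‖η - ω‖) ^ lam) ≤ C₂ :=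
    aux_sumB d lam c₀ hlam hc₀ j ω F hsepF
  calc (∑ η ∈ F, 1 / ((1 + 2^j * ‖ξ - η‖) ^ lam * (1 + 2^j * ‖η - ω‖) ^ lam))
      ≤ ∑ η ∈ F, (2:ℝ) ^ lam / S ^ lam *
          (1 / (1 + 2^j * ‖η - ξ‖) ^ lam + 1 / (1 + 2^j * ‖η - ω‖) ^ lam) :=
        Finset.sum_le_sum hpt
    _ = (2:ℝ) ^ lam / S ^ lam *
          ((∑ η ∈ F, 1 / (1 + 2^j * ‖η - ξ‖) ^ lam) +
           (∑ η ∈ F, 1 / (1 + 2^j * ‖η - ω‖) ^ lam)) := by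
        rw [← Finset.mul_sum, Finset.sum_add_distrib]
    _ ≤ (2:ℝ) ^ lam / S ^ lam * (C₂ + C₂) := by
        apply mul_le_mul_of_nonneg_left (add_le_add hsum1 hsum2) (by positivity)
    _ = 2 * (2:ℝ) ^ lam * C₂ / S ^ lam := by ring
end

section
/- For the Cesàro-type kernel P_n^{α,δ}(x;y) := Σ_{k=0}^n A_{n-k}^δ Σ_{|ν|=k} L_ν^α(x) L_ν^α(y) / L_ν^α(0) with A_m^δ = binom(m+δ, m), one has P_n^{α,δ}(x, 0) = L_n^{|α|+δ+d}(|x|), where |x| = x₁+⋯+x_d and L_ν^α(x) = ∏ᵢ L_{νᵢ}^{αᵢ}(xᵢ). -/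
/-!
The Laguerre polynomials satisfy the addition formula
`∑_{j+k=n} L_j^a(x) L_k^b(y) = L_n^{a+b+1}(x+y)`, the coefficient form of the product of their
generating functions `(1-t)^{-a-1} exp(-xt/(1-t))`. It follows from the explicit formula
`L_n^a(x) = ∑_{k+j=n} (-x)^k/k! · A_j^{a+k}` by the binomial theorem and the Chu–Vandermonde
identity `∑_{i+j=m} A_i^u A_j^v = A_m^{u+v+1}`. Iterating it over the coordinates gives
`∑_{|ν|=k} L_ν^α(x) = L_k^{|α|+d-1}(|x|)`, and since `A_m^δ = L_m^δ(0)`, the Cesàro sum is one more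
instance of the addition formula, with `y = 0`. The quotient by `L_ν^α(0) = ∏ A_{ν_i}^{α_i}` cancels
because `α_i > -1` makes it positive.
-/

noncomputable def lag (a : ℝ) (n : ℕ) (x : ℝ) : ℝ :=
  ∑ k ∈ Finset.range (n+1),
    ((∏ i ∈ Finset.range (n-k), (a + k + 1 + i)) / (Nat.factorial (n-k))) *
      (-x) ^ k / (Nat.factorial k)

/-- The Cesàro binomial coefficient A_m^δ = binom(m+δ, m). -/
noncomputable def Ad (δ : ℝ) (m : ℕ) : ℝ :=
  (∏ i ∈ Finset.range m, (δ + 1 + i)) / (Nat.factorial m)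

open Finset

theorem Ring.multichoose_add {R : Type*} [CommRing R] [BinomialRing R] (r s : R) (k : ℕ) :
    Ring.multichoose (r + s) k =
      ∑ p ∈ antidiagonal k, Ring.multichoose r p.1 * Ring.multichoose s p.2 := by
  -- upper negation, `choose (-r) k = (-1) ^ k • multichoose r k`, turns Chu–Vandermonde for
  -- `choose` into the same identity for `multichoose`
  have h := Ring.add_choose_eq k (Commute.all (-r) (-s))
  rw [← neg_add, Ring.choose_neg'] at h
  simp only [Ring.choose_neg', smul_mul_smul_comm, ← Int.negOnePow_add, ← Nat.cast_add] at h
  rw [sum_congr rfl fun p hp => by rw [mem_antidiagonal.mp hp], ← smul_sum] at h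
  exact MulAction.injective _ h

theorem add_pow_div_factorial {K : Type*} [Field K] [CharZero K] (x y : K) (n : ℕ) :
    (x + y) ^ n / n.factorial =
      ∑ p ∈ antidiagonal n, x ^ p.1 / p.1.factorial * (y ^ p.2 / p.2.factorial) := by
  rw [(Commute.all x y).add_pow', sum_div]
  refine sum_congr rfl fun p hp => ?_
  rw [← mem_antidiagonal.mp hp, nsmul_eq_mul, Nat.cast_add_choose]
  field_simp
  rw [mul_assoc, mul_assoc, mul_div_mul_left _ _ (Nat.cast_ne_zero.mpr (Nat.factorial_ne_zero _))]

theorem Ad_eq_multichoose (δ : ℝ) (m : ℕ) : Ad δ m = Ring.multichoose (δ + 1) m := by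
  rw [Ad, div_eq_iff (by positivity), mul_comm, ← nsmul_eq_mul,
    Ring.factorial_nsmul_multichoose_eq_ascPochhammer, Polynomial.ascPochhammer_smeval_eq_eval]
  induction m with
  | zero => simp
  | succ m ih => rw [prod_range_succ, ih, ascPochhammer_succ_right]; simp [add_right_comm]

theorem sum_antidiagonal_Ad_mul_Ad (u v : ℝ) (m : ℕ) :
    ∑ p ∈ antidiagonal m, Ad u p.1 * Ad v p.2 = Ad (u + v + 1) m := by
  simp only [Ad_eq_multichoose, ← Ring.multichoose_add]
  ring_nf

theorem lag_eq_sum_antidiagonal (a : ℝ) (n : ℕ) (x : ℝ) :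
    lag a n x = ∑ p ∈ antidiagonal n, (-x) ^ p.1 / p.1.factorial * Ad (a + p.1) p.2 := by
  rw [Nat.sum_antidiagonal_eq_sum_range_succ_mk, lag]
  refine sum_congr rfl fun k _ => ?_
  rw [Ad]
  ring

theorem lag_zero_right (a : ℝ) (n : ℕ) : lag a n 0 = Ad a n := by
  rw [lag_eq_sum_antidiagonal, sum_eq_single (0, n)]
  · simp
  · rintro ⟨k, m⟩ hkm hne
    have hk : k ≠ 0 := by rintro rfl; simp_all
    simp [hk]
  · simp

theorem Ad_pos {δ : ℝ} (hδ : -1 < δ) (m : ℕ) : 0 < Ad δ m := by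
  refine div_pos (prod_pos fun i _ => ?_) (by positivity)
  have : (0 : ℝ) ≤ i := i.cast_nonneg
  linarith

theorem Finset.Nat.sum_antidiagonal_sum_antidiagonal_transpose {M : Type*} [AddCommMonoid M]
    (f : ℕ → ℕ → ℕ → ℕ → M) (n : ℕ) :
    ∑ p ∈ antidiagonal n, ∑ q ∈ antidiagonal p.1, ∑ r ∈ antidiagonal p.2, f q.1 q.2 r.1 r.2 =
      ∑ p ∈ antidiagonal n, ∑ q ∈ antidiagonal p.1, ∑ r ∈ antidiagonal p.2, f q.1 r.1 q.2 r.2 := by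
  simp only [← sum_product', sum_sigma']
  let τ : (Σ _ : ℕ × ℕ, (ℕ × ℕ) × (ℕ × ℕ)) → Σ _ : ℕ × ℕ, (ℕ × ℕ) × (ℕ × ℕ) :=
    fun ⟨_, (q, r)⟩ => ⟨(q.1 + r.1, q.2 + r.2), ((q.1, r.1), (q.2, r.2))⟩
  refine sum_nbij' τ τ ?_ ?_ ?_ ?_ (fun _ _ => rfl) <;>
    rintro ⟨⟨_, _⟩, ⟨_, _⟩, ⟨_, _⟩⟩ h <;> simp_all [τ] <;> omega

theorem lag_add (a b x y : ℝ) (n : ℕ) :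
    ∑ p ∈ antidiagonal n, lag a p.1 x * lag b p.2 y = lag (a + b + 1) n (x + y) := by
  simp only [lag_eq_sum_antidiagonal, sum_mul_sum]
  rw [Nat.sum_antidiagonal_sum_antidiagonal_transpose fun k j k' j' =>
    (-x) ^ k / k.factorial * Ad (a + k) j * ((-y) ^ k' / k'.factorial * Ad (b + k') j')]
  refine sum_congr rfl fun p _ => ?_
  calc _ = ∑ q ∈ antidiagonal p.1, (-x) ^ q.1 / q.1.factorial * ((-y) ^ q.2 / q.2.factorial) *
          ∑ r ∈ antidiagonal p.2, Ad (a + q.1) r.1 * Ad (b + q.2) r.2 := by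
        simp only [mul_sum]; refine sum_congr rfl fun _ _ => sum_congr rfl fun _ _ => by ring
    _ = ∑ q ∈ antidiagonal p.1, (-x) ^ q.1 / q.1.factorial * ((-y) ^ q.2 / q.2.factorial) *
          Ad (a + b + 1 + p.1) p.2 := by
        refine sum_congr rfl fun q hq => ?_
        rw [sum_antidiagonal_Ad_mul_Ad, ← mem_antidiagonal.mp hq]
        push_cast; ring_nf
    _ = _ := by rw [← sum_mul, ← add_pow_div_factorial, neg_add]

theorem Finset.Nat.sum_antidiagonalTuple_succ {M : Type*} [AddCommMonoid M] (d k : ℕ)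
    (f : (Fin (d + 1) → ℕ) → M) :
    ∑ ν ∈ antidiagonalTuple (d + 1) k, f ν =
      ∑ p ∈ antidiagonal k, ∑ ν ∈ antidiagonalTuple d p.2, f (Fin.cons p.1 ν) := by
  show (Multiset.map f (Multiset.Nat.antidiagonalTuple (d + 1) k)).sum =
    (Multiset.map _ (Multiset.Nat.antidiagonal k)).sum
  simp [Multiset.Nat.antidiagonalTuple, List.Nat.antidiagonalTuple, Multiset.Nat.antidiagonal,
    List.flatMap, List.sum_flatten, Function.comp_def]
  rfl

theorem sum_antidiagonalTuple_prod_lag (d : ℕ) (α x : Fin d → ℝ) (k : ℕ) :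
    ∑ ν ∈ Nat.antidiagonalTuple d k, ∏ i, lag (α i) (ν i) (x i) =
      lag (∑ i, α i + d - 1) k (∑ i, x i) := by
  induction d generalizing k with
  | zero =>
    -- the parameter is `-1`, and `lag (-1) k 0 = Ad (-1) k` vanishes for `k > 0`, like the sum
    cases k <;> simp [lag_zero_right, Ad, prod_range_succ']
  | succ d ih =>
    simp only [Nat.sum_antidiagonalTuple_succ, Fin.prod_univ_succ, Fin.cons_zero, Fin.cons_succ,
      ← mul_sum, ih, lag_add, Fin.sum_univ_succ]
    push_cast; ring_nf

theorem stmt16_general (d : ℕ) (α : Fin d → ℝ) (hα : ∀ i, -1 < α i)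
    (δ : ℝ) (n : ℕ) (x : Fin d → ℝ) :
    (∑ k ∈ Finset.range (n+1), Ad δ (n-k) *
        ∑ ν ∈ Finset.Nat.antidiagonalTuple d k,
          (∏ i, lag (α i) (ν i) (x i)) * (∏ i, lag (α i) (ν i) 0) /
            (∏ i, lag (α i) (ν i) 0))
      = lag ((∑ i, α i) + δ + d) n (∑ i, x i) := by
  have hcancel (ν : Fin d → ℕ) : (∏ i, lag (α i) (ν i) (x i)) * (∏ i, lag (α i) (ν i) 0) /
      (∏ i, lag (α i) (ν i) 0) = ∏ i, lag (α i) (ν i) (x i) :=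
    mul_div_cancel_right₀ _ (prod_pos fun i _ => lag_zero_right _ _ ▸ Ad_pos (hα i) _).ne'
  simp only [hcancel, sum_antidiagonalTuple_prod_lag, ← lag_zero_right δ]
  calc _ = ∑ p ∈ antidiagonal n, lag (∑ i, α i + d - 1) p.1 (∑ i, x i) * lag δ p.2 0 := by
        rw [Nat.sum_antidiagonal_eq_sum_range_succ_mk]
        simp only [mul_comm]
    _ = _ := by
        rw [lag_add, add_zero]
        congr 1
        ring

theorem stmt16 (d : ℕ) (hd : 0 < d) (α : Fin d → ℝ) (hα : ∀ i, -1 < α i)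
    (δ : ℝ) (hδ : -1 < δ) (n : ℕ) (x : Fin d → ℝ) :
    (∑ k ∈ Finset.range (n+1), Ad δ (n-k) *
        ∑ ν ∈ Finset.Nat.antidiagonalTuple d k,
          (∏ i, lag (α i) (ν i) (x i)) * (∏ i, lag (α i) (ν i) 0) /
            (∏ i, lag (α i) (ν i) 0))
      = lag ((∑ i, α i) + δ + d) n (∑ i, x i) :=
  stmt16_general d α hα δ n x
end
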